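/- arXiv:1901.02870 — 7 statements merged into one kernel-verified Lean document; each statement's English description precedes it below -/
import Mathlib

section
/- Let Γ be an acyclic simple graph on a finite vertex set S, let σ be a graph automorphism of Γ, and let r_1, …, r_a ∈ S be vertices lying in pairwise distinct σ-orbits such that r_j is adjacent to r_{j+1} for every 1 ≤ j ≤ a−1. Then for every i with 3 ≤ i ≤ a, every m ∈ ℤ, every l with 1 ≤ l ≤ i−2 and every j with i ≤ j ≤ a, the vertex σ^m(r_l) is not adjacent to r_j (i.e., the sets {σ^m(r_{i−2}), …, σ^m(r_1)} and {r_a, …, r_i} are disconnected from each other). -/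
/-!
If `σ^m (r l)` were adjacent to `r j` with `l ≤ j - 2`, the path `r l, …, r j` followed by its
images under `σ^m, σ^(2m), …` would be an infinite walk in the finite forest `Γ`. Vertices two
steps apart on it come from different `r`'s, hence lie in different `σ`-orbits, so the walk never
backtracks. But in a forest a walk that never backtracks is a path, and paths are shorter than the
number of vertices.
-/

open Equiv

namespace SimpleGraph

variable {V : Type*} {G : SimpleGraph V}

def Walk.ofSeq {w : ℕ → V} (hw : ∀ t, G.Adj (w t) (w (t + 1))) : (n : ℕ) → G.Walk (w 0) (w n)
  | 0 => .nil
  | n + 1 => (Walk.ofSeq hw n).concat (hw n)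

@[simp]
lemma Walk.length_ofSeq {w : ℕ → V} (hw : ∀ t, G.Adj (w t) (w (t + 1))) (n : ℕ) :
    (Walk.ofSeq hw n).length = n := by
  induction n with
  | zero => rfl
  | succ n ih => simp [Walk.ofSeq, ih]

lemma IsAcyclic.isPath_ofSeq (hG : G.IsAcyclic) {w : ℕ → V} (hw : ∀ t, G.Adj (w t) (w (t + 1)))
    (hnb : ∀ t, w (t + 2) ≠ w t) (n : ℕ) : (Walk.ofSeq hw n).IsPath := by
  induction n with
  | zero => exact .nil
  | succ n ih =>
    refine ih.concat (fun hmem => ?_) (hw n)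
    have hpen := hG.eq_penultimate_of_adj_end ih (hw n) hmem
    cases n with
    | zero => exact (hw 0).ne hpen.symm
    | succ k => exact hnb k (by simpa [Walk.ofSeq] using hpen)

theorem IsAcyclic.exists_eq_add_two_of_adj_succ [Fintype V] (hG : G.IsAcyclic) {w : ℕ → V}
    (hw : ∀ t, G.Adj (w t) (w (t + 1))) : ∃ t, w (t + 2) = w t := by
  by_contra! hnb
  simpa using (hG.isPath_ofSeq hw hnb (Fintype.card V)).length_lt

lemma adj_zpow_apply_iff {σ : Perm V} (hσ : ∀ x y, G.Adj (σ x) (σ y) ↔ G.Adj x y) (m : ℤ)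
    (x y : V) : G.Adj ((σ ^ m) x) ((σ ^ m) y) ↔ G.Adj x y := by
  induction m using Int.induction_on generalizing x y with
  | zero => simp
  | succ n ih => rw [zpow_add_one, Perm.mul_apply, Perm.mul_apply, ih, hσ]
  | pred n ih =>
    rw [zpow_sub_one, Perm.mul_apply, Perm.mul_apply, ih]
    simpa using (hσ (σ⁻¹ x) (σ⁻¹ y)).symm

/-- The sequence `c 0, …, c d` followed by its translates under `σ ^ m, σ ^ (2 * m), …`. -/
def periodicExtension (σ : Perm V) (m : ℤ) (c : ℕ → V) (d t : ℕ) : V :=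
  (σ ^ (m * (t / (d + 1) : ℕ))) (c (t % (d + 1)))

lemma adj_periodicExtension_succ {σ : Perm V} (hσ : ∀ x y, G.Adj (σ x) (σ y) ↔ G.Adj x y)
    {c : ℕ → V} {d : ℕ} (hc : ∀ s < d, G.Adj (c s) (c (s + 1))) {m : ℤ}
    (hclose : G.Adj (c d) ((σ ^ m) (c 0))) (t : ℕ) :
    G.Adj (periodicExtension σ m c d t) (periodicExtension σ m c d (t + 1)) := by
  obtain ⟨q, s, hs, rfl⟩ : ∃ q s, s < d + 1 ∧ (d + 1) * q + s = t :=
    ⟨t / (d + 1), t % (d + 1), Nat.mod_lt _ d.succ_pos, Nat.div_add_mod t _⟩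
  have hdiv (q' s' : ℕ) (hs' : s' < d + 1) : ((d + 1) * q' + s') / (d + 1) = q' := by
    rw [Nat.mul_add_div d.succ_pos, Nat.div_eq_of_lt hs', add_zero]
  have hmod (q' s' : ℕ) (hs' : s' < d + 1) : ((d + 1) * q' + s') % (d + 1) = s' := by
    rw [Nat.mul_add_mod, Nat.mod_eq_of_lt hs']
  unfold periodicExtension
  rw [hdiv q s hs, hmod q s hs]
  rcases Nat.lt_or_ge s d with hsd | hsd
  · rw [add_assoc, hdiv q (s + 1) (by omega), hmod q (s + 1) (by omega), adj_zpow_apply_iff hσ]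
    exact hc s hsd
  · obtain rfl : d = s := by omega
    have hwrap : (d + 1) * q + d + 1 = (d + 1) * (q + 1) + 0 := by ring
    rw [hwrap, hdiv (q + 1) 0 d.succ_pos, hmod (q + 1) 0 d.succ_pos, Nat.cast_succ, mul_add_one,
      zpow_add, Perm.mul_apply, adj_zpow_apply_iff hσ]
    exact hclose

end SimpleGraph

open SimpleGraph

/-- Let `Γ` be an acyclic simple graph on a finite vertex set `S`,
`σ` a graph automorphism of `Γ`, and `r 1, …, r a` vertices lying in pairwise distinct
`σ`-orbits such that `r j` is adjacent to `r (j+1)` for `1 ≤ j ≤ a-1`.  Then for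
`3 ≤ i ≤ a`, any `m : ℤ`, any `1 ≤ l ≤ i-2` and any `i ≤ j ≤ a`, the vertex
`σ^m (r l)` is not adjacent to `r j`. -/
theorem stmt0 {S : Type*} [Fintype S] (Γ : SimpleGraph S) (hacyc : Γ.IsAcyclic)
    (σ : Equiv.Perm S) (hσ : ∀ x y : S, Γ.Adj (σ x) (σ y) ↔ Γ.Adj x y)
    (a : ℕ) (r : ℕ → S)
    (horb : ∀ j l : ℕ, 1 ≤ j → j ≤ a → 1 ≤ l → l ≤ a → j ≠ l →
      ∀ m : ℤ, (σ ^ m) (r j) ≠ r l)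
    (hadj : ∀ j : ℕ, 1 ≤ j → j < a → Γ.Adj (r j) (r (j + 1))) :
    ∀ i : ℕ, 3 ≤ i → i ≤ a → ∀ m : ℤ, ∀ l : ℕ, 1 ≤ l → l ≤ i - 2 →
      ∀ j : ℕ, i ≤ j → j ≤ a → ¬ Γ.Adj ((σ ^ m) (r l)) (r j) := by
  intro i hi hia m l hl hli j hij hja hA
  have hc : ∀ s < j - l, Γ.Adj (r (l + s)) (r (l + (s + 1))) := fun s hs =>
    hadj (l + s) (by omega) (by omega)
  have hclose : Γ.Adj (r (l + (j - l))) ((σ ^ m) (r (l + 0))) := by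
    rw [Nat.add_sub_cancel' (by omega), add_zero]
    exact hA.symm
  obtain ⟨t, ht⟩ := hacyc.exists_eq_add_two_of_adj_succ (adj_periodicExtension_succ hσ hc hclose)
  set D := j - l + 1
  have hres : (t + 2) % D ≠ t % D := fun h =>
    absurd (Nat.le_of_dvd two_pos (Nat.modEq_zero_iff_dvd.1
      (Nat.ModEq.add_left_cancel' t (h : t + 2 ≡ t + 0 [MOD D])))) (by omega)
  obtain ⟨n, hn⟩ : Perm.SameCycle σ (r (l + (t + 2) % D)) (r (l + t % D)) :=
    Perm.sameCycle_zpow_left.1 (Perm.sameCycle_zpow_right.1 (ht.sameCycle σ))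
  have hlt₁ := Nat.mod_lt t (show 0 < D by omega)
  have hlt₂ := Nat.mod_lt (t + 2) (show 0 < D by omega)
  exact horb _ _ (by omega) (by omega) (by omega) (by omega) (by omega) n hn
end

section
/- Let k be an algebraically closed field of characteristic different from 2, let V be a finite-dimensional k-vector space equipped with a nondegenerate symmetric bilinear form B, and let g be a linear automorphism of V preserving B (B(gx, gy) = B(x, y) for all x, y). Assume that for every c ∈ k the eigenspace ker(g − c·id) has dimension at most one. Then for j = 1 and for j = −1, the dimension of the generalized eigenspace V(g, j) := ker((g − j·id)^{dim V}) is either zero or odd. -/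
/-!
Write `f = g - j` and `W = ker f ^ dim V`. Since `j * j = 1`, isometry of `g` gives
`B x (f y) = -j * B (f x) (g y)`, so `W` is orthogonal to `range f ^ dim V`, and by the Fitting
decomposition `B` stays nondegenerate on `W`. On `W` the map `f` is nilpotent with kernel of
dimension at most one, hence a single Jordan block: for `n = dim W > 0` the map `T = f ^ (n - 1)`
is nonzero on `W` and has rank one. Its image lies in the `j`-eigenspace of `g`, which makes `T`
self-adjoint up to the sign `(-1) ^ (n - 1)`. For even `n` it is skew-adjoint, and in
characteristic `≠ 2` a skew-adjoint map of rank at most one for a nondegenerate symmetric form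
vanishes.
-/

open LinearMap (BilinForm ker range)
open Module (finrank)

section KernelDimension

variable {k V : Type*} [Field k] [AddCommGroup V] [Module k V] [FiniteDimensional k V]

theorem Submodule.finrank_comap_subtype_le (p q : Submodule k V) :
    finrank k (q.comap p.subtype) ≤ finrank k q := by
  rw [← Submodule.finrank_map_subtype_eq, Submodule.map_comap_subtype]
  exact Submodule.finrank_mono inf_le_right

namespace Module.End

theorem finrank_ker_mul_le (A C : Module.End k V) :
    finrank k (ker (A * C)) ≤ finrank k (ker A) + finrank k (ker C) := by
  have hrange : range (C.domRestrict (ker (A * C))) ≤ ker A := by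
    rintro _ ⟨x, rfl⟩
    exact x.2
  calc finrank k (ker (A * C))
      = finrank k (range (C.domRestrict (ker (A * C)))) +
          finrank k (ker (C.domRestrict (ker (A * C)))) :=
        (LinearMap.finrank_range_add_finrank_ker _).symm
    _ ≤ finrank k (ker A) + finrank k (ker C) := by
        rw [LinearMap.ker_domRestrict]
        exact add_le_add (Submodule.finrank_mono hrange) (Submodule.finrank_comap_subtype_le _ _)

theorem finrank_ker_pow_le (N : Module.End k V) (m : ℕ) :
    finrank k (ker (N ^ m)) ≤ m * finrank k (ker N) := by
  induction m with
  | zero => simp [one_eq_id]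
  | succ m ih =>
    calc finrank k (ker (N ^ (m + 1)))
        ≤ finrank k (ker (N ^ m)) + finrank k (ker N) := by
          rw [pow_succ]
          exact finrank_ker_mul_le _ _
      _ ≤ (m + 1) * finrank k (ker N) := by
          rw [add_mul, one_mul]
          gcongr

theorem pow_finrank_sub_one_ne_zero {N : Module.End k V} (hN : finrank k (ker N) ≤ 1)
    (hV : 0 < finrank k V) : N ^ (finrank k V - 1) ≠ 0 := by
  intro h
  have := (N.finrank_ker_pow_le (finrank k V - 1)).trans (Nat.mul_le_mul_left _ hN)
  rw [h, LinearMap.ker_zero, finrank_top] at this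
  omega

theorem pow_finrank_eq_zero_of_pow_eq_zero {N : Module.End k V} {m : ℕ} (h : N ^ m = 0) :
    N ^ finrank k V = 0 := by
  rcases le_total m (finrank k V) with hm | hm
  · rw [← Nat.add_sub_cancel' hm, pow_add, h, zero_mul]
  · rw [← LinearMap.ker_eq_top, ← ker_pow_eq_ker_pow_finrank_of_le hm, h, LinearMap.ker_zero]

theorem isCompl_ker_pow_finrank_range_pow (f : Module.End k V) :
    IsCompl (ker (f ^ finrank k V)) (range (f ^ finrank k V)) := by
  rw [Submodule.isCompl_iff_disjoint _ _
    (by rw [add_comm, LinearMap.finrank_range_add_finrank_ker]), Submodule.disjoint_def]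
  rintro _ hx ⟨y, rfl⟩
  rwa [LinearMap.mem_ker, ← mul_apply, ← pow_add, ← LinearMap.mem_ker,
    ker_pow_eq_ker_pow_finrank_of_le (Nat.le_add_left _ _)] at hx

end Module.End

end KernelDimension

namespace LinearMap.BilinForm

variable {k V : Type*} [Field k] [AddCommGroup V] [Module k V] {B : BilinForm k V}

theorem separatingLeft_restrict_of_isCompl (hB : B.SeparatingLeft) {W U : Submodule k V}
    (hWU : IsCompl W U) (horth : ∀ w ∈ W, ∀ u ∈ U, B w u = 0) :
    (B.restrict W).SeparatingLeft := by
  rintro ⟨w, hw⟩ hwW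
  ext
  refine hB w fun v ↦ ?_
  obtain ⟨a, ha, u, hu, rfl⟩ :=
    Submodule.mem_sup.mp (hWU.sup_eq_top ▸ Submodule.mem_top : v ∈ W ⊔ U)
  rw [map_add, horth w hw u hu, add_zero]
  exact hwW ⟨a, ha⟩

theorem eq_zero_of_isSkewAdjoint_of_finrank_range_le_one [FiniteDimensional k V]
    (h2 : (2 : k) ≠ 0) (hB : B.SeparatingLeft) (hsymm : B.IsSymm) {T : Module.End k V}
    (hT : B.IsSkewAdjoint T) (hrank : finrank k (range T) ≤ 1) : T = 0 := by
  have hskew : ∀ x y, B (T x) y = -B x (T y) := fun x y ↦ by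
    rw [hT x y, Pi.neg_apply, map_neg]
  obtain ⟨⟨_, e, rfl⟩, hspan⟩ := finrank_le_one_iff.mp hrank
  have hmul : ∀ y, ∃ c : k, T y = c • T e := fun y ↦ by
    obtain ⟨c, hc⟩ := hspan ⟨T y, mem_range_self T y⟩
    exact ⟨c, (congrArg Subtype.val hc).symm⟩
  have hTee : B (T e) e = 0 := by
    have := hskew e e
    rw [hsymm.eq e] at this
    exact (mul_eq_zero.mp (by linear_combination this : (2 : k) * B (T e) e = 0)).resolve_left h2
  have hTe : T e = 0 := hB _ fun y ↦ by
    obtain ⟨c, hc⟩ := hmul y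
    rw [hsymm.eq, ← neg_eq_zero, ← hskew, hc, map_smul, smul_apply, hTee, smul_zero]
  ext y
  obtain ⟨c, hc⟩ := hmul y
  rw [hc, hTe, smul_zero, LinearMap.zero_apply]

variable {g : Module.End k V} {j : k}

theorem apply_pow_apply_pow (hg : ∀ x y, B (g x) (g y) = B x y) (m : ℕ) (x y : V) :
    B ((g ^ m) x) ((g ^ m) y) = B x y := by
  induction m with
  | zero => rfl
  | succ m ih => rw [pow_succ', Module.End.mul_apply, Module.End.mul_apply, hg, ih]

theorem apply_sub_smul_apply (hg : ∀ x y, B (g x) (g y) = B x y) (hj : j * j = 1) (x y : V) :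
    B x ((g - j • 1) y) = -j * B ((g - j • 1) x) (g y) := by
  simp only [LinearMap.sub_apply, LinearMap.smul_apply, Module.End.one_apply, map_sub, map_smul,
    smul_eq_mul]
  linear_combination (-B x (g y)) * hj + j * hg x y

theorem apply_sub_smul_pow_apply (hg : ∀ x y, B (g x) (g y) = B x y) (hj : j * j = 1) (m : ℕ)
    (x y : V) :
    B x (((g - j • 1) ^ m) y) = (-j) ^ m * B (((g - j • 1) ^ m) x) ((g ^ m) y) := by
  induction m generalizing y with
  | zero => simp
  | succ m ih =>
    have hcomm : Commute (g ^ m) (g - j • 1) :=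
      ((Commute.refl g).sub_right ((Commute.one_right g).smul_right j)).pow_left m
    calc B x (((g - j • 1) ^ (m + 1)) y)
        = (-j) ^ m * B (((g - j • 1) ^ m) x) ((g - j • 1) ((g ^ m) y)) := by
          rw [pow_succ, Module.End.mul_apply, ih, ← Module.End.mul_apply (g ^ m), hcomm.eq,
            Module.End.mul_apply]
      _ = (-j) ^ (m + 1) * B (((g - j • 1) ^ (m + 1)) x) ((g ^ (m + 1)) y) := by
          rw [apply_sub_smul_apply hg hj, pow_succ' (g - j • 1), pow_succ' g,
            Module.End.mul_apply, Module.End.mul_apply, pow_succ]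
          ring

theorem apply_sub_smul_pow_apply_of_pow_succ_eq_zero (hg : ∀ x y, B (g x) (g y) = B x y)
    (hj : j * j = 1) {m : ℕ} {x : V} (hx : ((g - j • 1) ^ (m + 1)) x = 0) (y : V) :
    B x (((g - j • 1) ^ m) y) = (-1) ^ m * B (((g - j • 1) ^ m) x) y := by
  set v := ((g - j • 1) ^ m) x
  have hv : g v = j • v := by
    rw [pow_succ', Module.End.mul_apply] at hx
    simpa [sub_eq_zero] using hx
  have hvm : ∀ i : ℕ, (g ^ i) v = j ^ i • v := by
    intro i
    induction i with
    | zero => simp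
    | succ i ih => rw [pow_succ', Module.End.mul_apply, ih, map_smul, hv, smul_smul, pow_succ]
  rw [apply_sub_smul_pow_apply hg hj, ← apply_pow_apply_pow hg m v y, hvm, map_smul, smul_apply,
    smul_eq_mul]
  ring

theorem separatingLeft_restrict_ker_pow_sub_smul [FiniteDimensional k V] (hB : B.SeparatingLeft)
    (hg : ∀ x y, B (g x) (g y) = B x y) (hj : j * j = 1) :
    (B.restrict (ker ((g - j • 1) ^ finrank k V))).SeparatingLeft :=
  separatingLeft_restrict_of_isCompl hB (g - j • 1).isCompl_ker_pow_finrank_range_pow <| by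
    rintro w hw _ ⟨y, rfl⟩
    rw [apply_sub_smul_pow_apply hg hj, LinearMap.mem_ker.mp hw, map_zero, LinearMap.zero_apply,
      mul_zero]

theorem finrank_eq_zero_or_odd_of_apply_pow_finrank_sub_one [FiniteDimensional k V]
    (h2 : (2 : k) ≠ 0) (hB : B.SeparatingLeft) (hsymm : B.IsSymm) {N : Module.End k V}
    (hN : N ^ finrank k V = 0) (hker : finrank k (ker N) ≤ 1)
    (hsign : ∀ x y, B x ((N ^ (finrank k V - 1)) y) =
      (-1) ^ (finrank k V - 1) * B ((N ^ (finrank k V - 1)) x) y) :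
    finrank k V = 0 ∨ Odd (finrank k V) := by
  rcases Nat.eq_zero_or_pos (finrank k V) with hV | hV
  · exact Or.inl hV
  refine Or.inr (Nat.not_even_iff_odd.mp fun heven ↦
    Module.End.pow_finrank_sub_one_ne_zero hker hV ?_)
  refine eq_zero_of_isSkewAdjoint_of_finrank_range_le_one h2 hB hsymm (fun x y ↦ ?_)
    ((Submodule.finrank_mono ?_).trans hker)
  · rw [Pi.neg_apply, map_neg, hsign, (Nat.Even.sub_odd hV heven odd_one).neg_one_pow,
      neg_one_mul, neg_neg]
  · rintro _ ⟨x, rfl⟩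
    rw [LinearMap.mem_ker, ← Module.End.mul_apply, ← pow_succ', Nat.sub_add_cancel hV, hN,
      LinearMap.zero_apply]

end LinearMap.BilinForm

theorem stmt3_general {k V : Type*} [Field k] (h2 : (2 : k) ≠ 0)
    [AddCommGroup V] [Module k V] [FiniteDimensional k V]
    (B : LinearMap.BilinForm k V) (hsymm : ∀ x y : V, B x y = B y x)
    (hnd : B.Nondegenerate)
    (g : V ≃ₗ[k] V) (hg : ∀ x y : V, B (g x) (g y) = B x y)
    (hreg : ∀ c : k, Module.finrank k
      (LinearMap.ker ((g : Module.End k V) - c • (1 : Module.End k V))) ≤ 1) :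
    ∀ j : k, j = 1 ∨ j = -1 →
      Module.finrank k (LinearMap.ker
          (((g : Module.End k V) - j • (1 : Module.End k V)) ^ Module.finrank k V)) = 0 ∨
      Odd (Module.finrank k (LinearMap.ker
          (((g : Module.End k V) - j • (1 : Module.End k V)) ^ Module.finrank k V))) := by
  intro j hj
  have hj2 : j * j = 1 := by rcases hj with rfl | rfl <;> norm_num
  have hgB : ∀ x y, B ((g : Module.End k V) x) ((g : Module.End k V) y) = B x y := hg
  set f : Module.End k V := (g : Module.End k V) - j • 1
  set W := ker (f ^ finrank k V)
  have hfW : ∀ x ∈ W, f x ∈ W := fun x hx ↦ by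
    rw [LinearMap.mem_ker, ← Module.End.mul_apply, ← pow_succ, pow_succ', Module.End.mul_apply,
      LinearMap.mem_ker.mp hx, map_zero]
  set N := f.restrict hfW
  have hNpow (m : ℕ) (x : W) : ((N ^ m) x : V) = (f ^ m) x := by
    rw [Module.End.pow_restrict]
    rfl
  have hNn : N ^ finrank k W = 0 := Module.End.pow_finrank_eq_zero_of_pow_eq_zero
    (LinearMap.ext fun x ↦ Subtype.ext ((hNpow _ x).trans (LinearMap.mem_ker.mp x.2)))
  refine LinearMap.BilinForm.finrank_eq_zero_or_odd_of_apply_pow_finrank_sub_one h2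
    (LinearMap.BilinForm.separatingLeft_restrict_ker_pow_sub_smul hnd.1 hgB hj2)
    ⟨fun x y ↦ hsymm x y⟩ hNn ?_ fun x y ↦ ?_
  · rw [LinearMap.ker_restrict]
    exact (Submodule.finrank_comap_subtype_le _ _).trans (hreg j)
  · have hx : (f ^ (finrank k W - 1 + 1)) x = 0 := by
      rw [← hNpow, pow_eq_zero_of_le (by omega) hNn, LinearMap.zero_apply, ZeroMemClass.coe_zero]
    change B x ((N ^ _) y : V) = _ * B ((N ^ _) x : V) y
    rw [hNpow, hNpow]
    exact LinearMap.BilinForm.apply_sub_smul_pow_apply_of_pow_succ_eq_zero hgB hj2 hx y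

/-- Let `k` be an algebraically closed field of characteristic ≠ 2,
`V` a finite-dimensional `k`-vector space with a nondegenerate symmetric bilinear
form `B`, and `g` a linear automorphism of `V` preserving `B` all of whose
eigenspaces have dimension at most one.  Then for `j = 1` and `j = -1`, the
dimension of the generalized eigenspace `ker ((g - j·id)^(dim V))` is zero or odd. -/
theorem stmt3 {k V : Type*} [Field k] [IsAlgClosed k] (h2 : (2 : k) ≠ 0)
    [AddCommGroup V] [Module k V] [FiniteDimensional k V]
    (B : LinearMap.BilinForm k V) (hsymm : ∀ x y : V, B x y = B y x)
    (hnd : B.Nondegenerate)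
    (g : V ≃ₗ[k] V) (hg : ∀ x y : V, B (g x) (g y) = B x y)
    (hreg : ∀ c : k, Module.finrank k
      (LinearMap.ker ((g : Module.End k V) - c • (1 : Module.End k V))) ≤ 1) :
    ∀ j : k, j = 1 ∨ j = -1 →
      Module.finrank k (LinearMap.ker
          (((g : Module.End k V) - j • (1 : Module.End k V)) ^ Module.finrank k V)) = 0 ∨
      Odd (Module.finrank k (LinearMap.ker
          (((g : Module.End k V) - j • (1 : Module.End k V)) ^ Module.finrank k V))) :=
  stmt3_general h2 B hsymm hnd g hg hreg
end

section
/- Fix an odd prime power q, let k be an algebraic closure of F_q, and let f ∈ F_q[λ] be monic irreducible, self-reciprocal, of even degree d. Call a tuple (λ_1, …, λ_{d/2}) ∈ (k^×)^{d/2} an admissible enumeration for f if the d elements λ_1, …, λ_{d/2}, λ_1^{-1}, …, λ_{d/2}^{-1} are pairwise distinct and are exactly the roots of f in k, and moreover λ_1^q = λ_2, λ_2^q = λ_3, …, λ_{d/2−1}^q = λ_{d/2}, and λ_{d/2}^q = λ_1^{-1}. Then the number of admissible enumerations for f is exactly d; in particular at least one exists. -/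
/-- The reciprocal polynomial `f*(λ) = f(0)⁻¹ · λ^(deg f) · f(1/λ)` of a
polynomial `f` over a field. -/
noncomputable def recip {F : Type*} [Field F] (f : Polynomial F) : Polynomial F :=
  Polynomial.C (f.coeff 0)⁻¹ * f.reverse

/-- An *admissible enumeration* for `f`: a tuple `Λ = (λ_1, …, λ_n)` of nonzero
elements of `k` (here `n = (deg f)/2`) such that the `2n` elements
`λ_1, …, λ_n, λ_1⁻¹, …, λ_n⁻¹` are pairwise distinct and are exactly the roots
of `f` in `k`, and `λ_1^q = λ_2, …, λ_{n-1}^q = λ_n, λ_n^q = λ_1⁻¹`. -/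
def AdmEnum {F k : Type*} [CommRing F] [Field k] [Algebra F k] (q : ℕ)
    (f : Polynomial F) (n : ℕ) (Λ : Fin n → k) : Prop :=
  (∀ i, Λ i ≠ 0) ∧
  Function.Injective (Sum.elim Λ fun i => (Λ i)⁻¹) ∧
  Set.range (Sum.elim Λ fun i => (Λ i)⁻¹) = f.rootSet k ∧
  (∀ i j : Fin n, (j : ℕ) = (i : ℕ) + 1 → Λ i ^ q = Λ j) ∧
  (∀ i j : Fin n, (i : ℕ) = n - 1 → (j : ℕ) = 0 → Λ i ^ q = (Λ j)⁻¹)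

/-! The roots of an irreducible `f` of degree `d` over `F_q` form the Frobenius orbit
`α, α ^ q, …, α ^ q ^ (d - 1)` of any one root `α`, and these are pairwise distinct since
`α ^ q ^ s = α` exactly when `d ∣ s` (the Frobenius of `F_q⟮α⟯` has order `d`). Self-reciprocity
puts `α⁻¹` in this orbit, which forces `α ^ q ^ (d / 2) = α⁻¹`. So the Frobenius orbit of any root,
cut in half, is an admissible enumeration, and an admissible enumeration is determined by its
first entry. -/

open Polynomial IntermediateField FiniteField

theorem natDegree_minpoly_of_irreducible {F K : Type*} [Field F] [Field K] [Algebra F K]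
    {f : F[X]} (hf : Irreducible f) {α : K} (hα : aeval α f = 0) :
    (minpoly F α).natDegree = f.natDegree := by
  rw [← minpoly.eq_of_irreducible hf hα,
    natDegree_mul_C (inv_ne_zero (leadingCoeff_ne_zero.mpr hf.ne_zero))]

section FrobeniusOrbit

variable {F K : Type*} [Field F] [Fintype F] [Field K] [Algebra F K]

theorem pow_card_pow_eq_self_iff {α : K} (hα : IsIntegral F α) (s : ℕ) :
    α ^ Fintype.card F ^ s = α ↔ (minpoly F α).natDegree ∣ s := by
  have : FiniteDimensional F F⟮α⟯ := adjoin.finiteDimensional hα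
  have : Finite F⟮α⟯ := Module.finite_of_finite F
  rw [← adjoin.finrank hα, ← orderOf_frobeniusAlgHom F F⟮α⟯, orderOf_dvd_iff_pow_eq_one]
  constructor
  · intro h
    refine adjoin_algHom_ext F fun x hx => Subtype.ext ?_
    rw [Set.mem_singleton_iff] at hx
    subst hx
    simpa [AlgHom.coe_pow, coe_frobeniusAlgHom, pow_iterate] using h
  · intro h
    simpa [AlgHom.coe_pow, coe_frobeniusAlgHom, pow_iterate] using
      congr_arg ((↑) : F⟮α⟯ → K) (DFunLike.congr_fun h (AdjoinSimple.gen F α))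

theorem pow_card_pow_mem_rootSet {f : F[X]} {α : K} (hα : α ∈ f.rootSet K) (s : ℕ) :
    α ^ Fintype.card F ^ s ∈ f.rootSet K := by
  rw [mem_rootSet] at hα ⊢
  refine ⟨hα.1, ?_⟩
  have h := aeval_algHom_apply (frobeniusAlgHom F K ^ s) α f
  rw [hα.2, map_zero, AlgHom.coe_pow, coe_frobeniusAlgHom, pow_iterate] at h
  exact h

theorem injective_pow_card_pow {f : F[X]} (hf : Irreducible f) {α : K} (hα : aeval α f = 0)
    {d : ℕ} (hd : f.natDegree = d) :
    Function.Injective fun i : Fin d => α ^ Fintype.card F ^ (i : ℕ) := by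
  have hfrob : Function.Injective fun x : K => x ^ Fintype.card F :=
    (frobeniusAlgHom F K).toRingHom.injective
  suffices h : ∀ i j : Fin d, (i : ℕ) ≤ j →
      α ^ Fintype.card F ^ (i : ℕ) = α ^ Fintype.card F ^ (j : ℕ) → i = j by
    intro i j hij
    rcases le_total (i : ℕ) j with hle | hle
    exacts [h i j hle hij, (h j i hle hij.symm).symm]
  intro i j hle hij
  have hfix : α ^ Fintype.card F ^ ((j : ℕ) - i) = α := by
    apply hfrob.iterate i
    simp only [pow_iterate, ← pow_mul, ← pow_add, Nat.sub_add_cancel hle]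
    exact hij.symm
  rw [pow_card_pow_eq_self_iff (IsAlgebraic.isIntegral ⟨f, hf.ne_zero, hα⟩),
    natDegree_minpoly_of_irreducible hf hα, hd] at hfix
  have := Nat.eq_zero_of_dvd_of_lt hfix (by omega)
  exact Fin.ext (by omega)

theorem range_pow_card_pow {f : F[X]} (hf : Irreducible f) {α : K} (hα : aeval α f = 0)
    {d : ℕ} (hd : f.natDegree = d) :
    Set.range (fun i : Fin d => α ^ Fintype.card F ^ (i : ℕ)) = f.rootSet K := by
  have hroot : α ∈ f.rootSet K := mem_rootSet.mpr ⟨hf.ne_zero, hα⟩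
  refine Set.eq_of_subset_of_ncard_le ?_ ?_ (f.rootSet_finite K)
  · rintro _ ⟨i, rfl⟩
    exact pow_card_pow_mem_rootSet hroot i
  · rw [Set.ncard_range_of_injective (injective_pow_card_pow hf hα hd), Nat.card_fin, ← hd]
    exact f.ncard_rootSet_le K

theorem natCard_rootSet {f : F[X]} (hf : Irreducible f) {α : K} (hα : aeval α f = 0) :
    Nat.card (f.rootSet K) = f.natDegree := by
  rw [← range_pow_card_pow hf hα rfl,
    Nat.card_range_of_injective (injective_pow_card_pow hf hα rfl), Nat.card_fin]

end FrobeniusOrbit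

section SelfReciprocal

variable {F K : Type*} [Field F] [Field K] [Algebra F K] {f : F[X]}

theorem coeff_zero_ne_zero_of_recip_eq (hf : f ≠ 0) (hsr : recip f = f) : f.coeff 0 ≠ 0 := by
  intro h
  rw [recip, h, inv_zero, map_zero, zero_mul] at hsr
  exact hf hsr.symm

theorem ne_zero_of_mem_rootSet_of_recip_eq (hsr : recip f = f) {α : K}
    (hα : α ∈ f.rootSet K) : α ≠ 0 := by
  rintro rfl
  rw [mem_rootSet, ← coeff_zero_eq_aeval_zero', _root_.map_eq_zero] at hα
  exact coeff_zero_ne_zero_of_recip_eq hα.1 hsr hα.2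

theorem inv_mem_rootSet_of_recip_eq (hsr : recip f = f) {α : K} (hα : α ∈ f.rootSet K) :
    α⁻¹ ∈ f.rootSet K := by
  have : Invertible α := invertibleOfNonzero (ne_zero_of_mem_rootSet_of_recip_eq hsr hα)
  have hrev : aeval α⁻¹ f.reverse = 0 := by
    rw [← invOf_eq_inv, aeval_def, eval₂_reverse_eq_zero_iff]
    exact (mem_rootSet.mp hα).2
  refine mem_rootSet.mpr ⟨(mem_rootSet.mp hα).1, ?_⟩
  rw [← hsr, recip, map_mul, hrev, mul_zero]

end SelfReciprocal

-- The inverse of a root is a Galois conjugate `α ^ q ^ j`; then `α ^ q ^ (2 j) = α` forces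
-- `j ∈ {0, n}`, and `j = 0` would give `α = ±1 ∈ F`.
theorem pow_card_pow_half_eq_inv {F K : Type*} [Field F] [Fintype F] [Field K] [Algebra F K]
    {f : F[X]} (hf : Irreducible f) (hsr : recip f = f) {n : ℕ} (hn : f.natDegree = n + n)
    {α : K} (hα : aeval α f = 0) : α ^ Fintype.card F ^ n = α⁻¹ := by
  have hroot : α ∈ f.rootSet K := mem_rootSet.mpr ⟨hf.ne_zero, hα⟩
  obtain ⟨⟨j, hjlt⟩, hj⟩ : α⁻¹ ∈ Set.range fun i : Fin (n + n) => α ^ Fintype.card F ^ (i : ℕ) := by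
    rw [range_pow_card_pow hf hα hn]
    exact inv_mem_rootSet_of_recip_eq hsr hroot
  simp only at hj
  have hfix : α ^ Fintype.card F ^ (j + j) = α := by
    rw [pow_add, pow_mul, hj, inv_pow, hj, inv_inv]
  rw [pow_card_pow_eq_self_iff (IsAlgebraic.isIntegral ⟨f, hf.ne_zero, hα⟩),
    natDegree_minpoly_of_irreducible hf hα, hn, ← two_mul, ← two_mul,
    Nat.mul_dvd_mul_iff_left two_pos] at hfix
  obtain ⟨c, hc⟩ := hfix
  have hc2 : c < 2 := by
    by_contra!
    nlinarith
  interval_cases c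
  · have hsq : α * α = 1 := by
      rw [hc, mul_zero, pow_zero, pow_one] at hj
      nth_rw 2 [hj]
      rw [mul_inv_cancel₀ (ne_zero_of_mem_rootSet_of_recip_eq hsr hroot)]
    have hrange : α ∈ (algebraMap F K).range := by
      rcases mul_self_eq_one_iff.mp hsq with h | h
      exacts [⟨1, by rw [h, map_one]⟩, ⟨-1, by rw [h, map_neg, map_one]⟩]
    have := minpoly.natDegree_eq_one_iff.mpr hrange
    rw [natDegree_minpoly_of_irreducible hf hα] at this
    omega
  · rwa [hc, mul_one] at hj

namespace AdmEnum

variable {F K : Type*} [CommRing F] [Field K] [Algebra F K] {q : ℕ} {f : F[X]} {n : ℕ}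
  {Λ : Fin n → K}

theorem mem_rootSet (h : AdmEnum q f n Λ) (i : Fin n) : Λ i ∈ f.rootSet K :=
  h.2.2.1 ▸ ⟨Sum.inl i, rfl⟩

theorem apply_eq_pow (h : AdmEnum q f n Λ) (i : Fin n) : Λ i = Λ ⟨0, i.pos⟩ ^ q ^ (i : ℕ) := by
  obtain ⟨i, hi⟩ := i
  induction i with
  | zero => simp
  | succ i ih =>
    rw [← h.2.2.2.1 ⟨i, by omega⟩ ⟨i + 1, hi⟩ rfl, ih, ← pow_mul, ← pow_succ]

end AdmEnum

section AdmissibleEnumeration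

variable {F K : Type*} [Field F] [Fintype F] [Field K] [Algebra F K] {f : F[X]} {n : ℕ}

theorem admEnum_pow_card_pow (hf : Irreducible f) (hsr : recip f = f)
    (hn : f.natDegree = n + n) {α : K} (hα : aeval α f = 0) :
    AdmEnum (Fintype.card F) f n fun i => α ^ Fintype.card F ^ (i : ℕ) := by
  have hhalf := pow_card_pow_half_eq_inv hf hsr hn hα
  have horbit : (Sum.elim (fun i : Fin n => α ^ Fintype.card F ^ (i : ℕ))
      fun i : Fin n => (α ^ Fintype.card F ^ (i : ℕ))⁻¹) =
      (fun i : Fin (n + n) => α ^ Fintype.card F ^ (i : ℕ)) ∘ finSumFinEquiv := by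
    ext (i | i)
    · rfl
    · simp only [Sum.elim_inr, Function.comp_apply, finSumFinEquiv_apply_right, Fin.val_natAdd,
        pow_add, pow_mul, hhalf, inv_pow]
  refine ⟨fun i => ?_, ?_, ?_, fun i j hij => ?_, fun i j hi hj => ?_⟩
  · exact pow_ne_zero _ (ne_zero_of_mem_rootSet_of_recip_eq hsr (mem_rootSet.mpr ⟨hf.ne_zero, hα⟩))
  · rw [horbit]
    exact (injective_pow_card_pow hf hα hn).comp finSumFinEquiv.injective
  · rw [horbit, EquivLike.range_comp, range_pow_card_pow hf hα hn]
  · dsimp only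
    rw [← pow_mul, ← pow_succ, hij]
  · dsimp only
    rw [← pow_mul, ← pow_succ, hi, hj, Nat.sub_add_cancel i.pos, pow_zero, pow_one, hhalf]

def admEnumEquivRootSet (hf : Irreducible f) (hsr : recip f = f) (hn : f.natDegree = n + n)
    (hpos : 0 < n) :
    {Λ : Fin n → K | AdmEnum (Fintype.card F) f n Λ} ≃ f.rootSet K where
  toFun Λ := ⟨Λ.1 ⟨0, hpos⟩, Λ.2.mem_rootSet _⟩
  invFun α := ⟨_, admEnum_pow_card_pow hf hsr hn (mem_rootSet.mp α.2).2⟩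
  left_inv Λ := Subtype.ext (funext fun i => (Λ.2.apply_eq_pow i).symm)
  right_inv α := Subtype.ext (by simp)

end AdmissibleEnumeration

theorem stmt5_general (q : ℕ)
    {F : Type*} [Field F] [Fintype F] (hcard : Fintype.card F = q)
    (k : Type*) [Field k] [Algebra F k] [IsAlgClosure F k]
    (f : Polynomial F) (hirr : Irreducible f)
    (hsr : recip f = f)
    (d : ℕ) (hd : d = f.natDegree) (heven : Even d) :
    Nat.card {Λ : Fin (d / 2) → k | AdmEnum q f (d / 2) Λ} = d ∧
    ∃ Λ : Fin (d / 2) → k, AdmEnum q f (d / 2) Λ := by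
  subst hcard
  obtain ⟨n, rfl⟩ := heven
  have hn : f.natDegree = n + n := hd.symm
  have hpos : 0 < n := by have := hirr.natDegree_pos; omega
  rw [show (n + n) / 2 = n by omega]
  have : IsAlgClosed k := IsAlgClosure.isAlgClosed F
  obtain ⟨α, hα⟩ := IsAlgClosed.exists_aeval_eq_zero k f (degree_pos_of_irreducible hirr).ne'
  refine ⟨?_, _, admEnum_pow_card_pow hirr hsr hn hα⟩
  rw [Nat.card_congr (admEnumEquivRootSet hirr hsr hn hpos), natCard_rootSet hirr hα, hn]

/-- Fix an odd prime power `q`, let `k` be an algebraic closure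
of `F_q`, and let `f ∈ F_q[λ]` be monic irreducible self-reciprocal of even
degree `d`.  Then the number of admissible enumerations of the roots of `f`
is exactly `d`; in particular at least one exists. -/
theorem stmt5 (q : ℕ) (hq : ∃ p m : ℕ, p.Prime ∧ 0 < m ∧ q = p ^ m) (hodd : Odd q)
    {F : Type*} [Field F] [Fintype F] (hcard : Fintype.card F = q)
    (k : Type*) [Field k] [Algebra F k] [IsAlgClosure F k]
    (f : Polynomial F) (hmonic : f.Monic) (hirr : Irreducible f)
    (hsr : recip f = f)
    (d : ℕ) (hd : d = f.natDegree) (heven : Even d) :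
    Nat.card {Λ : Fin (d / 2) → k | AdmEnum q f (d / 2) Λ} = d ∧
    ∃ Λ : Fin (d / 2) → k, AdmEnum q f (d / 2) Λ :=
  stmt5_general q hcard k f hirr hsr d hd heven
end

section
/- Fix an odd prime power q. Let f ∈ F_q[λ] be monic and self-reciprocal. Assume there is a unique monic irreducible self-reciprocal polynomial Q_0 ∈ F_q[λ] such that the multiplicity m_{Q_0}(f) of Q_0 in f is odd, and let m be an odd integer with 1 ≤ m ≤ m_{Q_0}(f). Then the square of the number of monic polynomials U ∈ F_q[λ] satisfying U·U* = f/Q_0^m equals the product of (1 + m_Q(f)) over all monic irreducible polynomials Q ∈ F_q[λ] with Q(0) ≠ 0, Q ≠ Q*, and Q dividing f. -/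
namespace Multiset

open Function

variable {α : Type*} {r : α → α}

def halves (r : α → α) (M : Multiset α) : Set (Multiset α) := {s | s + s.map r = M}

theorem le_of_mem_halves {s M : Multiset α} (h : s ∈ halves r M) : s ≤ M :=
  h ▸ le_add_right s _

theorem filter_add_eq_left {p : α → Prop} [DecidablePred p] {a b : Multiset α}
    (ha : ∀ z ∈ a, p z) (hb : ∀ z ∈ b, ¬p z) : (a + b).filter p = a := by
  rw [filter_add, filter_eq_self.mpr ha, filter_eq_nil.mpr hb, add_zero]

theorem map_filter_eq_self {p : α → Prop} [DecidablePred p]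
    (hp : ∀ x, p (r x) ↔ p x) {M : Multiset α} (hM : M.map r = M) :
    (M.filter p).map r = M.filter p := by
  conv_rhs => rw [← hM]
  rw [filter_map]
  exact congrArg (map r) (filter_congr fun x _ => (hp x).symm)

variable [DecidableEq α]

def nonfixedProd (r : α → α) (M : Multiset α) : ℕ :=
  ∏ x ∈ M.toFinset with r x ≠ x, (1 + M.count x)

theorem count_map_of_involutive (hr : Involutive r) (s : Multiset α) (x : α) :
    (s.map r).count x = s.count (r x) := by
  conv_lhs => rw [← hr x]
  exact count_map_eq_count' r s hr.injective (r x)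

theorem mem_halves_iff (hr : Involutive r) {s M : Multiset α} :
    s ∈ halves r M ↔ ∀ x, s.count x + s.count (r x) = M.count x := by
  simp only [halves, Set.mem_ofPred_eq, Multiset.ext, count_add, count_map_of_involutive hr]

theorem filter_mem_halves (hr : Involutive r) {p : α → Prop} [DecidablePred p]
    (hp : ∀ x, p (r x) ↔ p x) {s M : Multiset α} (hs : s ∈ halves r M) :
    s.filter p ∈ halves r (M.filter p) := by
  rw [mem_halves_iff hr] at hs ⊢
  intro x
  by_cases hx : p x
  · simp only [count_filter_of_pos hx, count_filter_of_pos ((hp x).mpr hx), hs]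
  · simp only [count_filter_of_neg hx, count_filter_of_neg (mt (hp x).mp hx)]

theorem card_halves_eq_mul (hr : Involutive r) (p : α → Prop) [DecidablePred p]
    (hp : ∀ x, p (r x) ↔ p x) (M : Multiset α) :
    Nat.card (halves r M) =
      Nat.card (halves r (M.filter p)) * Nat.card (halves r (M.filter (¬p ·))) := by
  have hnp : ∀ x, ¬p (r x) ↔ ¬p x := fun x => not_congr (hp x)
  rw [← Nat.card_prod]
  refine Nat.card_congr
    { toFun := fun s => (⟨s.1.filter p, filter_mem_halves hr hp s.2⟩,
        ⟨s.1.filter (¬p ·), filter_mem_halves hr hnp s.2⟩)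
      invFun := fun ab => ⟨ab.1.1 + ab.2.1, ?_⟩
      left_inv := fun s => Subtype.ext (filter_add_not p s.1)
      right_inv := fun ⟨a, b⟩ => ?_ }
  · obtain ⟨⟨a, ha⟩, ⟨b, hb⟩⟩ := ab
    change a + b + (a + b).map r = M
    rw [map_add, add_add_add_comm, ha, hb, filter_add_not]
  · have ha : ∀ z ∈ a.1, p z := fun z hz =>
      of_mem_filter (mem_of_le (le_of_mem_halves a.2) hz)
    have hb : ∀ z ∈ b.1, ¬p z := fun z hz =>
      of_mem_filter (p := (¬p ·)) (mem_of_le (le_of_mem_halves b.2) hz)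
    refine Prod.ext (Subtype.ext (filter_add_eq_left ha hb)) (Subtype.ext ?_)
    change (a.1 + b.1).filter (¬p ·) = b.1
    rw [add_comm]
    exact filter_add_eq_left hb fun z hz => not_not.mpr (ha z hz)

theorem halves_replicate_of_fixed (hr : Involutive r) {x : α} (hx : r x = x) (k : ℕ) :
    halves r (replicate (k + k) x) = {replicate k x} := by
  have hrx : ∀ z, r z = x ↔ z = x := fun z => ⟨fun h => by rw [← hr z, h, hx], fun h => h ▸ hx⟩
  ext s
  rw [mem_halves_iff hr, Set.mem_singleton_iff, Multiset.ext]
  simp only [count_replicate, eq_comm (a := x)]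
  constructor
  · intro h z
    have hz := h z
    by_cases hzx : z = x
    · subst hzx
      simp only [hx, if_true] at hz ⊢
      omega
    · simp only [hzx, if_false] at hz ⊢
      omega
  · intro h z
    simp only [h, hrx]
    split_ifs <;> rfl

theorem card_halves_replicate_add_replicate (hr : Involutive r) {x : α} (hx : r x ≠ x) (e : ℕ) :
    Nat.card (halves r (replicate e x + replicate e (r x))) = e + 1 := by
  rw [← Nat.card_fin (e + 1)]
  refine Nat.card_congr
    { toFun := fun s => ⟨s.1.count x, ?_⟩
      invFun := fun a => ⟨replicate a x + replicate (e - a) (r x), ?_⟩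
      left_inv := fun s => Subtype.ext ?_
      right_inv := fun a => Fin.ext ?_ }
  · have := count_le_of_le x (le_of_mem_halves s.2)
    simp only [count_add, count_replicate_self, count_replicate, hx, if_false] at this
    omega
  · have ha : a.1 ≤ e := Nat.lt_succ_iff.mp a.2
    change _ + map r _ = _
    simp only [map_add, map_replicate, hr x]
    rw [add_comm (replicate a (r x)), add_add_add_comm, ← replicate_add, ← replicate_add,
      Nat.add_sub_cancel' ha, Nat.sub_add_cancel ha]
  · obtain ⟨s, hs⟩ := s
    have hsum := (mem_halves_iff hr).mp hs x
    rw [count_add, count_replicate_self, count_replicate, if_neg hx, add_zero] at hsum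
    ext z
    dsimp only
    rw [count_add, count_replicate, count_replicate]
    by_cases hzx : x = z
    · subst hzx
      rw [if_pos rfl, if_neg hx, add_zero]
    · by_cases hzr : r x = z
      · subst hzr
        rw [if_neg hzx, if_pos rfl]
        omega
      · rw [if_neg hzx, if_neg hzr, add_zero, eq_comm, ← Nat.le_zero]
        simpa [count_replicate, hzx, hzr] using count_le_of_le z (le_of_mem_halves hs)
  · simp [count_replicate, hx]

theorem nonfixedProd_filter_mul (p : α → Prop) [DecidablePred p] (M : Multiset α) :
    nonfixedProd r (M.filter p) * nonfixedProd r (M.filter (¬p ·)) = nonfixedProd r M := by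
  unfold nonfixedProd
  rw [← Finset.prod_filter_mul_prod_filter_not (M.toFinset.filter fun x => r x ≠ x) p,
    toFinset_filter, toFinset_filter, Finset.filter_comm p, Finset.filter_comm (¬p ·)]
  congr 1 <;> refine Finset.prod_congr rfl fun x hx => ?_ <;> rw [Finset.mem_filter] at hx
  · rw [count_filter_of_pos hx.2]
  · rw [count_filter_of_pos (p := fun x => ¬p x) hx.2]

theorem nonfixedProd_add_of_forall_fixed {A : Multiset α} (hA : ∀ x ∈ A, r x = x)
    (M : Multiset α) : nonfixedProd r (A + M) = nonfixedProd r M := by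
  have hnotA : ∀ x, r x ≠ x → x ∉ A := fun x hx hxA => hx (hA x hxA)
  have hsupp :
      (A + M).toFinset.filter (fun x => r x ≠ x) = M.toFinset.filter (fun x => r x ≠ x) := by
    ext x
    simp only [Finset.mem_filter, mem_toFinset, mem_add]
    exact ⟨fun h => ⟨h.1.resolve_left (hnotA x h.2), h.2⟩, fun h => ⟨Or.inr h.1, h.2⟩⟩
  rw [nonfixedProd, nonfixedProd, hsupp]
  refine Finset.prod_congr rfl fun x hx => ?_
  rw [count_add, count_eq_zero.mpr (hnotA x (Finset.mem_filter.mp hx).2), zero_add]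

theorem nonfixedProd_replicate_of_fixed {x : α} (hx : r x = x) (n : ℕ) :
    nonfixedProd r (replicate n x) = 1 := by
  rw [← add_zero (replicate n x),
    nonfixedProd_add_of_forall_fixed (fun z hz => (eq_of_mem_replicate hz) ▸ hx)]
  simp [nonfixedProd]

theorem nonfixedProd_replicate_add_replicate (hr : Involutive r) {x : α} (hx : r x ≠ x)
    {e : ℕ} (he : e ≠ 0) : nonfixedProd r (replicate e x + replicate e (r x)) = (e + 1) ^ 2 := by
  have hsupp :
      (replicate e x + replicate e (r x)).toFinset.filter (fun z => r z ≠ z) = {x, r x} := by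
    ext z
    simp only [Finset.mem_filter, mem_toFinset, mem_add, mem_replicate, ne_eq, he,
      not_false_eq_true, true_and, Finset.mem_insert, Finset.mem_singleton]
    refine ⟨fun h => h.1, ?_⟩
    rintro (rfl | rfl)
    · exact ⟨Or.inl rfl, hx⟩
    · exact ⟨Or.inr rfl, by rw [hr x]; exact hx.symm⟩
  rw [nonfixedProd, hsupp, Finset.prod_pair hx.symm]
  simp [count_replicate, hx, hx.symm]
  ring

theorem sq_card_halves_filter_orbit (hr : Involutive r) {M : Multiset α} (hM : M.map r = M)
    (heven : ∀ x ∈ M, r x = x → Even (M.count x)) {x : α} (hx : x ∈ M) :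
    Nat.card (halves r (M.filter (fun z => z = x ∨ z = r x))) ^ 2 =
      nonfixedProd r (M.filter (fun z => z = x ∨ z = r x)) := by
  by_cases hfix : r x = x
  · obtain ⟨k, hk⟩ := heven x hx hfix
    have hB : M.filter (fun z => z = x ∨ z = r x) = replicate (k + k) x := by
      simp only [hfix, or_self]
      rw [filter_eq', hk]
    rw [hB, halves_replicate_of_fixed hr hfix, nonfixedProd_replicate_of_fixed hfix,
      Nat.card_unique, one_pow]
  · have hcount : M.count (r x) = M.count x := by rw [← count_map_of_involutive hr, hM]
    have hB : M.filter (fun z => z = x ∨ z = r x) =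
        replicate (M.count x) x + replicate (M.count x) (r x) := by
      ext z
      rw [count_filter, count_add, count_replicate, count_replicate]
      by_cases hzx : z = x
      · subst hzx
        simp [hfix, Ne.symm hfix]
      · by_cases hzr : z = r x
        · subst hzr
          simp [hfix, Ne.symm hfix, hcount]
        · simp [hzx, hzr, Ne.symm hzx, Ne.symm hzr]
    rw [hB, card_halves_replicate_add_replicate hr hfix,
      nonfixedProd_replicate_add_replicate hr hfix (count_ne_zero.mpr hx)]

theorem sq_card_halves (hr : Involutive r) {M : Multiset α} (hM : M.map r = M)
    (heven : ∀ x ∈ M, r x = x → Even (M.count x)) :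
    Nat.card (halves r M) ^ 2 = nonfixedProd r M := by
  -- Split off the orbit `{x, r x}` of some `x ∈ M`: both sides are multiplicative.
  induction M using strongInductionOn with
  | ih M ih =>
  obtain rfl | ⟨x, hx⟩ := M.empty_or_exists_mem
  · simp [halves, nonfixedProd]
  set p : α → Prop := fun z => z = x ∨ z = r x
  have hp : ∀ z, p (r z) ↔ p z := fun z => by
    simp only [p, hr.eq_iff, hr x]
    exact or_comm
  have hnp : ∀ z, ¬p (r z) ↔ ¬p z := fun z => not_congr (hp z)
  have hlt : M.filter (¬p ·) < M := by
    refine (filter_le _ M).lt_of_ne fun h => ?_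
    rw [← h] at hx
    exact of_mem_filter hx (Or.inl rfl)
  rw [card_halves_eq_mul hr p hp, mul_pow, ← nonfixedProd_filter_mul p,
    sq_card_halves_filter_orbit hr hM heven hx, ih _ hlt (map_filter_eq_self hnp hM)
      fun z hz hrz => by
        rw [count_filter_of_pos (of_mem_filter hz)]
        exact heven z (mem_of_mem_filter hz) hrz]

end Multiset

section Reciprocal

open Polynomial

variable {F : Type*} [Field F] {p : F[X]}

noncomputable def mirrorMulEquiv : F[X] ≃* F[X] where
  toFun := mirror
  invFun := mirror
  left_inv := mirror_involutive
  right_inv := mirror_involutive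
  map_mul' _ _ := mirror_mul_of_domain _ _

theorem recip_eq_C_mul_mirror (h0 : p.coeff 0 ≠ 0) : recip p = C (p.coeff 0)⁻¹ * p.mirror := by
  rw [recip, mirror, natTrailingDegree_eq_zero.mpr (Or.inr h0), pow_zero, mul_one]

theorem recip_mul (p q : F[X]) : recip (p * q) = recip p * recip q := by
  simp only [recip, mul_coeff_zero, mul_inv, reverse_mul_of_domain, map_mul]
  ring

noncomputable def recipHom : F[X] →* F[X] where
  toFun := recip
  map_one' := by rw [recip, ← C_1, reverse_C, coeff_C_zero, inv_one, C_1, one_mul]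
  map_mul' := recip_mul

theorem recip_multiset_prod (s : Multiset F[X]) : recip s.prod = (s.map recip).prod :=
  map_multiset_prod recipHom s

theorem recip_pow (p : F[X]) (n : ℕ) : recip (p ^ n) = recip p ^ n := map_pow recipHom p n

theorem recip_eq_zero_iff : recip p = 0 ↔ p.coeff 0 = 0 := by
  simp only [recip, mul_eq_zero, C_eq_zero, inv_eq_zero, reverse_eq_zero, or_iff_left_iff_imp]
  rintro rfl
  exact coeff_zero 0

theorem coeff_zero_recip (p : F[X]) : (recip p).coeff 0 = (p.coeff 0)⁻¹ * p.leadingCoeff := by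
  rw [recip, coeff_C_mul, coeff_zero_reverse]

theorem coeff_zero_recip_ne_zero (h0 : p.coeff 0 ≠ 0) : (recip p).coeff 0 ≠ 0 := by
  rw [coeff_zero_recip]
  exact mul_ne_zero (inv_ne_zero h0) (leadingCoeff_ne_zero.mpr fun h => h0 (h ▸ coeff_zero 0))

theorem monic_recip (h0 : p.coeff 0 ≠ 0) : (recip p).Monic := by
  rw [Monic, recip, leadingCoeff_mul, leadingCoeff_C, reverse_leadingCoeff, trailingCoeff,
    natTrailingDegree_eq_zero.mpr (Or.inr h0), inv_mul_cancel₀ h0]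

theorem recip_recip (hm : p.Monic) (h0 : p.coeff 0 ≠ 0) : recip (recip p) = p := by
  rw [recip_eq_C_mul_mirror (coeff_zero_recip_ne_zero h0), coeff_zero_recip, hm.leadingCoeff,
    mul_one, inv_inv, recip_eq_C_mul_mirror h0, mirror_mul_of_domain, mirror_C,
    mirror_mirror, ← mul_assoc, ← C_mul, mul_inv_cancel₀ h0, C_1, one_mul]

theorem irreducible_recip (h0 : p.coeff 0 ≠ 0) (hp : Irreducible p) : Irreducible (recip p) := by
  rw [recip_eq_C_mul_mirror h0, irreducible_isUnit_mul (isUnit_C.mpr (inv_ne_zero h0).isUnit)]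
  exact hp.map mirrorMulEquiv

theorem coeff_zero_ne_zero_of_dvd {p q : F[X]} (h : p ∣ q) (hq : q.coeff 0 ≠ 0) :
    p.coeff 0 ≠ 0 := by
  obtain ⟨c, rfl⟩ := h
  exact left_ne_zero_of_mul (mul_coeff_zero p c ▸ hq)

open Classical in
/-- `recip` is an involution only on monic polynomials with nonzero constant term; outside them
this is the identity, so that it is an involution of all of `F[X]` agreeing with `recip` on
monic irreducible factors. -/
noncomputable def recipInvolution (p : F[X]) : F[X] :=
  if p.Monic ∧ p.coeff 0 ≠ 0 then recip p else p

theorem recipInvolution_of_monic (hm : p.Monic) (h0 : p.coeff 0 ≠ 0) :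
    recipInvolution p = recip p := by
  simp [recipInvolution, hm, h0]

theorem recipInvolution_involutive : Function.Involutive (recipInvolution (F := F)) := by
  intro p
  by_cases h : p.Monic ∧ p.coeff 0 ≠ 0
  · rw [recipInvolution_of_monic h.1 h.2,
      recipInvolution_of_monic (monic_recip h.2) (coeff_zero_recip_ne_zero h.2),
      recip_recip h.1 h.2]
  · unfold recipInvolution
    rw [if_neg h, if_neg h]

theorem recipInvolution_eq_self_of_recip_eq (h : recip p = p) : recipInvolution p = p := by
  unfold recipInvolution
  split_ifs <;> [exact h; rfl]

theorem recipInvolution_ne_self_iff (hm : p.Monic) :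
    recipInvolution p ≠ p ↔ p.coeff 0 ≠ 0 ∧ p ≠ recip p := by
  by_cases h0 : p.coeff 0 = 0
  · simp [recipInvolution, h0]
  · rw [recipInvolution_of_monic hm h0, ne_comm]
    exact (and_iff_right h0).symm

end Reciprocal

section Factors

open Polynomial UniqueFactorizationMonoid

variable {F : Type*} [Field F] [DecidableEq F] {g : F[X]}

theorem normalizedFactors_prod_of_monic_irreducible {s : Multiset F[X]}
    (hs : ∀ p ∈ s, p.Monic ∧ Irreducible p) : normalizedFactors s.prod = s := by
  rw [normalizedFactors_multiset_prod s fun h => (hs 0 h).2.ne_zero rfl]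
  conv_rhs => rw [← Multiset.sum_map_singleton s]
  exact congrArg Multiset.sum (Multiset.map_congr rfl fun p hp => by
    rw [normalizedFactors_irreducible (hs p hp).2, (hs p hp).1.normalize_eq_self])

theorem prod_normalizedFactors_of_monic (hg : g.Monic) : (normalizedFactors g).prod = g := by
  rw [prod_normalizedFactors_eq hg.ne_zero, hg.normalize_eq_self]

theorem monic_irreducible_of_mem_normalizedFactors (hg0 : g.coeff 0 ≠ 0) {p : F[X]}
    (hp : p ∈ normalizedFactors g) : p.Monic ∧ Irreducible p ∧ p.coeff 0 ≠ 0 := by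
  have hg : g ≠ 0 := fun h => hg0 (h ▸ coeff_zero 0)
  obtain ⟨hirr, hm, hdvd⟩ := (Polynomial.mem_normalizedFactors_iff hg).mp hp
  exact ⟨hm, hirr, coeff_zero_ne_zero_of_dvd hdvd hg0⟩

theorem map_recipInvolution_normalizedFactors (hg0 : g.coeff 0 ≠ 0) :
    (normalizedFactors g).map recipInvolution = (normalizedFactors g).map recip :=
  Multiset.map_congr rfl fun _ hp =>
    have h := monic_irreducible_of_mem_normalizedFactors hg0 hp
    recipInvolution_of_monic h.1 h.2.2

theorem normalizedFactors_recip (hg : g.Monic) (hg0 : g.coeff 0 ≠ 0) :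
    normalizedFactors (recip g) = (normalizedFactors g).map recipInvolution := by
  rw [map_recipInvolution_normalizedFactors hg0]
  conv_lhs => rw [← prod_normalizedFactors_of_monic hg, recip_multiset_prod]
  refine normalizedFactors_prod_of_monic_irreducible fun q hq => ?_
  obtain ⟨p, hp, rfl⟩ := Multiset.mem_map.mp hq
  obtain ⟨-, hirr, h0⟩ := monic_irreducible_of_mem_normalizedFactors hg0 hp
  exact ⟨monic_recip h0, irreducible_recip h0 hirr⟩

theorem monic_irreducible_of_mem_halves (hg0 : g.coeff 0 ≠ 0) {s : Multiset F[X]}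
    (hs : s ∈ Multiset.halves recipInvolution (normalizedFactors g)) {p : F[X]} (hp : p ∈ s) :
    p.Monic ∧ Irreducible p ∧ p.coeff 0 ≠ 0 :=
  monic_irreducible_of_mem_normalizedFactors hg0
    (Multiset.mem_of_le (Multiset.le_of_mem_halves hs) hp)

theorem card_monic_mul_recip_eq_card_halves (hg : g.Monic) (hg0 : g.coeff 0 ≠ 0) :
    Nat.card {U : F[X] | U.Monic ∧ U * recip U = g} =
      Nat.card (Multiset.halves recipInvolution (normalizedFactors g)) := by
  refine Nat.card_congr
    { toFun := fun U => ⟨normalizedFactors U.1, ?_⟩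
      invFun := fun s => ⟨s.1.prod, ?_⟩
      left_inv := fun U => Subtype.ext (prod_normalizedFactors_of_monic U.2.1)
      right_inv := fun s => Subtype.ext (normalizedFactors_prod_of_monic_irreducible fun p hp =>
        (monic_irreducible_of_mem_halves hg0 s.2 hp).imp_right And.left) }
  · obtain ⟨U, hUm, hU⟩ := U
    have hrU : recip U ≠ 0 := right_ne_zero_of_mul (hU ▸ hg.ne_zero)
    have hU0 : U.coeff 0 ≠ 0 := recip_eq_zero_iff.not.mp hrU
    change _ + _ = _
    rw [← normalizedFactors_recip hUm hU0, ← normalizedFactors_mul hUm.ne_zero hrU, hU]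
  · obtain ⟨s, hs⟩ := s
    have hmem := fun p (hp : p ∈ s) => monic_irreducible_of_mem_halves hg0 hs hp
    refine ⟨by simpa using monic_multiset_prod_of_monic s id fun p hp => (hmem p hp).1, ?_⟩
    rw [recip_multiset_prod, ← Multiset.map_congr rfl fun p hp =>
      recipInvolution_of_monic (hmem p hp).1 (hmem p hp).2.2, ← Multiset.prod_add, hs,
      prod_normalizedFactors_of_monic hg]

theorem multiplicity_eq_count_normalizedFactors_of_monic {Q f : F[X]} (hQ : Irreducible Q)
    (hQm : Q.Monic) (hf : f ≠ 0) : multiplicity Q f = (normalizedFactors f).count Q := by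
  rw [multiplicity_eq_count_normalizedFactors hQ hf, hQm.normalize_eq_self]

theorem normalizedFactors_pow_mul {Q : F[X]} (hQ : Irreducible Q) (hQm : Q.Monic) (m : ℕ)
    (hg : g ≠ 0) :
    normalizedFactors (Q ^ m * g) = Multiset.replicate m Q + normalizedFactors g := by
  rw [normalizedFactors_mul (pow_ne_zero m hQ.ne_zero) hg, normalizedFactors_pow,
    normalizedFactors_irreducible hQ, hQm.normalize_eq_self, Multiset.nsmul_singleton]

theorem multiplicity_pow_mul {Q₀ Q : F[X]} (hQ₀ : Irreducible Q₀) (hQ₀m : Q₀.Monic) (m : ℕ)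
    (hg : g ≠ 0) (hQ : Irreducible Q) (hQm : Q.Monic) :
    multiplicity Q (Q₀ ^ m * g) = (if Q₀ = Q then m else 0) + (normalizedFactors g).count Q := by
  rw [multiplicity_eq_count_normalizedFactors_of_monic hQ hQm
      (mul_ne_zero (pow_ne_zero m hQ₀.ne_zero) hg),
    normalizedFactors_pow_mul hQ₀ hQ₀m m hg, Multiset.count_add, Multiset.count_replicate]

theorem finprod_one_add_multiplicity_eq_nonfixedProd {f : F[X]} (hf : f ≠ 0) :
    ∏ᶠ Q ∈ {Q : F[X] | Q.Monic ∧ Irreducible Q ∧ Q.coeff 0 ≠ 0 ∧ Q ≠ recip Q ∧ Q ∣ f},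
        (1 + multiplicity Q f) =
      Multiset.nonfixedProd recipInvolution (normalizedFactors f) := by
  have hset : {Q : F[X] | Q.Monic ∧ Irreducible Q ∧ Q.coeff 0 ≠ 0 ∧ Q ≠ recip Q ∧ Q ∣ f} =
      ↑((normalizedFactors f).toFinset.filter fun Q => recipInvolution Q ≠ Q) := by
    ext Q
    simp only [Finset.coe_filter, Multiset.mem_toFinset, Polynomial.mem_normalizedFactors_iff hf,
      Set.mem_ofPred_eq]
    constructor
    · rintro ⟨hm, hirr, h0, hne, hdvd⟩
      exact ⟨⟨hirr, hm, hdvd⟩, (recipInvolution_ne_self_iff hm).mpr ⟨h0, hne⟩⟩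
    · rintro ⟨⟨hirr, hm, hdvd⟩, hne⟩
      obtain ⟨h0, hne⟩ := (recipInvolution_ne_self_iff hm).mp hne
      exact ⟨hm, hirr, h0, hne, hdvd⟩
  rw [hset, finprod_mem_coe_finset, Multiset.nonfixedProd]
  refine Finset.prod_congr rfl fun Q hQ => ?_
  obtain ⟨hirr, hm, -⟩ := (Polynomial.mem_normalizedFactors_iff hf).mp
    (Multiset.mem_toFinset.mp (Finset.mem_filter.mp hQ).1)
  rw [multiplicity_eq_count_normalizedFactors_of_monic hirr hm hf]

end Factors

theorem stmt8_general {F : Type*} [Field F]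
    (f : Polynomial F) (hmonic : f.Monic) (h0 : f.coeff 0 ≠ 0) (hsr : recip f = f)
    (Q0 : Polynomial F) (hQ0monic : Q0.Monic) (hQ0irr : Irreducible Q0)
    (hQ0sr : recip Q0 = Q0)
    (hQ0odd : Odd (multiplicity Q0 f))
    (huniq : ∀ Q : Polynomial F, Q.Monic → Irreducible Q → Q.coeff 0 ≠ 0 →
      recip Q = Q → Odd (multiplicity Q f) → Q = Q0)
    (m : ℕ) (hmodd : Odd m) (hm2 : m ≤ multiplicity Q0 f) :
    (Nat.card {U : Polynomial F | U.Monic ∧ U * recip U = f / Q0 ^ m}) ^ 2 =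
      ∏ᶠ Q ∈ {Q : Polynomial F |
          Q.Monic ∧ Irreducible Q ∧ Q.coeff 0 ≠ 0 ∧ Q ≠ recip Q ∧ Q ∣ f},
        (1 + multiplicity Q f) := by
  classical
  obtain ⟨g, rfl⟩ : Q0 ^ m ∣ f := pow_dvd_of_le_multiplicity hm2
  have hQ0m : Q0 ^ m ≠ 0 := pow_ne_zero m hQ0monic.ne_zero
  have hg : g.Monic := (hQ0monic.pow m).of_mul_monic_left hmonic
  have hg0 : g.coeff 0 ≠ 0 := right_ne_zero_of_mul (Polynomial.mul_coeff_zero (Q0 ^ m) g ▸ h0)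
  have hgsr : recip g = g := mul_left_cancel₀ hQ0m (by rwa [recip_mul, recip_pow, hQ0sr] at hsr)
  set M := UniqueFactorizationMonoid.normalizedFactors g
  have hmult := fun Q => multiplicity_pow_mul (Q := Q) hQ0irr hQ0monic m hg.ne_zero
  have heven : ∀ Q ∈ M, recipInvolution Q = Q → Even (M.count Q) := by
    intro Q hQ hfix
    obtain ⟨hQm, hQirr, hQ0⟩ := monic_irreducible_of_mem_normalizedFactors hg0 hQ
    by_cases hQ0Q : Q0 = Q
    · subst hQ0Q
      rw [hmult Q0 hQirr hQm, if_pos rfl] at hQ0odd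
      exact (Nat.odd_add.mp hQ0odd).mp hmodd
    · have hQsr : recip Q = Q := recipInvolution_of_monic hQm hQ0 ▸ hfix
      have := mt (huniq Q hQm hQirr hQ0 hQsr) (Ne.symm hQ0Q)
      rwa [hmult Q hQirr hQm, if_neg hQ0Q, zero_add, Nat.not_odd_iff_even] at this
  rw [mul_div_cancel_left₀ g hQ0m, card_monic_mul_recip_eq_card_halves hg hg0,
    Multiset.sq_card_halves recipInvolution_involutive
      (by rw [← normalizedFactors_recip hg hg0, hgsr]) heven,
    finprod_one_add_multiplicity_eq_nonfixedProd hmonic.ne_zero,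
    normalizedFactors_pow_mul hQ0irr hQ0monic m hg.ne_zero,
    Multiset.nonfixedProd_add_of_forall_fixed]
  exact fun Q hQ => Multiset.eq_of_mem_replicate hQ ▸ recipInvolution_eq_self_of_recip_eq hQ0sr

/-- Let `f ∈ F_q[λ]` (with `q` odd) be monic self-reciprocal.
Assume there is a unique monic irreducible self-reciprocal `Q₀` whose
multiplicity `m_{Q₀}(f)` in `f` is odd, and let `m` be odd with
`1 ≤ m ≤ m_{Q₀}(f)`.  Then the square of the number of monic `U` with
`U·U* = f/Q₀^m` equals `∏ (1 + m_Q(f))` over all monic irreducible `Q` with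
`Q(0) ≠ 0`, `Q ≠ Q*` and `Q ∣ f`. -/
theorem stmt8 {F : Type*} [Field F] [Fintype F] (hodd : Odd (Fintype.card F))
    (f : Polynomial F) (hmonic : f.Monic) (h0 : f.coeff 0 ≠ 0) (hsr : recip f = f)
    (Q0 : Polynomial F) (hQ0monic : Q0.Monic) (hQ0irr : Irreducible Q0)
    (hQ00 : Q0.coeff 0 ≠ 0) (hQ0sr : recip Q0 = Q0)
    (hQ0odd : Odd (multiplicity Q0 f))
    (huniq : ∀ Q : Polynomial F, Q.Monic → Irreducible Q → Q.coeff 0 ≠ 0 →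
      recip Q = Q → Odd (multiplicity Q f) → Q = Q0)
    (m : ℕ) (hmodd : Odd m) (hm1 : 1 ≤ m) (hm2 : m ≤ multiplicity Q0 f) :
    (Nat.card {U : Polynomial F | U.Monic ∧ U * recip U = f / Q0 ^ m}) ^ 2 =
      ∏ᶠ Q ∈ {Q : Polynomial F |
          Q.Monic ∧ Irreducible Q ∧ Q.coeff 0 ≠ 0 ∧ Q ≠ recip Q ∧ Q ∣ f},
        (1 + multiplicity Q f) :=
  stmt8_general f hmonic h0 hsr Q0 hQ0monic hQ0irr hQ0sr hQ0odd huniq m hmodd hm2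
end

section
/- Fix an odd prime power q. Let V be a finite-dimensional F_q-vector space with a nondegenerate symmetric bilinear form B, and let g be an isometry of (V, B) whose minimal polynomial equals its characteristic polynomial f_g ∈ F_q[λ]. Then for every d ≥ 0, the map W ↦ (characteristic polynomial of g restricted to W) is a bijection from the set of d-dimensional g-stable totally isotropic F_q-subspaces W ⊆ V onto the set of monic polynomials U ∈ F_q[λ] of degree d such that U·U* divides f_g in F_q[λ]; the inverse map sends U to ker U(g). -/
/-!
Because the minimal and characteristic polynomials of `g` agree, every factorisation
`f_g = U * h` gives `ker U(g) = range h(g)` of dimension `deg U`: on `range U(g)` the minimal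
polynomial of `g` is divisible by `h`, and on `range h(g) ≤ ker U(g)` by `U`, so rank–nullity
forces equality. Hence a `g`-stable `W` is the kernel of its own minimal polynomial, which
therefore is its characteristic polynomial and divides `f_g`.

For an isometry, `B (p(g) x) (g^N y) = B x (p^rev(g) y)` whenever `deg p ≤ N`, so `range h(g)` is
totally isotropic iff `(h^rev * h)(g) = 0`, i.e. `U * h ∣ h^rev * h`, i.e. `U ∣ h^rev`,
i.e. `U* ∣ h`, i.e. `U * U* ∣ f_g`.
-/

open Polynomial Module

namespace Polynomial

variable {R : Type*} [Semiring R]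

theorem reverse_reverse_of_coeff_zero_ne_zero {p : R[X]} (hp : p.coeff 0 ≠ 0) :
    p.reverse.reverse = p := by
  have hdeg : p.reverse.natDegree = p.natDegree := by
    rw [reverse_natDegree, natTrailingDegree_eq_zero.mpr (Or.inr hp), Nat.sub_zero]
  rw [reverse, hdeg, reverse, reflect_reflect]

variable [NoZeroDivisors R]

theorem reverse_dvd_reverse {p q : R[X]} (h : p ∣ q) : p.reverse ∣ q.reverse := by
  obtain ⟨t, rfl⟩ := h
  exact ⟨t.reverse, reverse_mul_of_domain p t⟩

theorem dvd_reverse_iff_reverse_dvd {p q : R[X]} (hp : p.coeff 0 ≠ 0) (hq : q.coeff 0 ≠ 0) :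
    p ∣ q.reverse ↔ p.reverse ∣ q := by
  constructor
  · intro h
    simpa only [reverse_reverse_of_coeff_zero_ne_zero hq] using reverse_dvd_reverse h
  · intro h
    simpa only [reverse_reverse_of_coeff_zero_ne_zero hp] using reverse_dvd_reverse h

end Polynomial

section Recip

variable {F : Type*} [Field F]

theorem recip_dvd_iff {p q : F[X]} (hp : p.coeff 0 ≠ 0) : recip p ∣ q ↔ p.reverse ∣ q :=
  C_mul_dvd (inv_ne_zero hp)

theorem mul_recip_dvd_mul_iff {p q : F[X]} (hp : p.coeff 0 ≠ 0) (hq : q.coeff 0 ≠ 0) :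
    p * recip p ∣ p * q ↔ p * q ∣ q.reverse * q := by
  have hp0 : p ≠ 0 := fun h ↦ hp (by simp [h])
  have hq0 : q ≠ 0 := fun h ↦ hq (by simp [h])
  rw [mul_dvd_mul_iff_left hp0, mul_dvd_mul_iff_right hq0, recip_dvd_iff hp,
    dvd_reverse_iff_reverse_dvd hp hq]

end Recip

namespace Module.End

variable {F V : Type*} [Field F] [AddCommGroup V] [Module F V] (g : Module.End F V)

theorem commute_aeval (p : F[X]) : Commute g (aeval g p) := by
  simpa using (commute_X p).map (aeval g)

theorem mapsTo_ker_aeval (p : F[X]) :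
    ∀ x ∈ LinearMap.ker (aeval g p), g x ∈ LinearMap.ker (aeval g p) := by
  intro x hx
  rw [LinearMap.mem_ker] at hx ⊢
  rw [← Module.End.mul_apply, ← (commute_aeval g p).eq, Module.End.mul_apply, hx, map_zero]

theorem mapsTo_range_aeval (p : F[X]) :
    ∀ x ∈ LinearMap.range (aeval g p), g x ∈ LinearMap.range (aeval g p) := by
  rintro _ ⟨y, rfl⟩
  refine ⟨g y, ?_⟩
  rw [← Module.End.mul_apply, ← (commute_aeval g p).eq, Module.End.mul_apply]

theorem range_aeval_le_ker_aeval {p q : F[X]} (hpq : p * q = minpoly F g) :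
    LinearMap.range (aeval g q) ≤ LinearMap.ker (aeval g p) := by
  rintro _ ⟨x, rfl⟩
  rw [LinearMap.mem_ker, ← Module.End.mul_apply, ← map_mul, hpq, minpoly.aeval,
    LinearMap.zero_apply]

variable {g} {W : Submodule F V} (hW : ∀ x ∈ W, g x ∈ W)

theorem aeval_restrict_apply (p : F[X]) (x : W) :
    (aeval (g.restrict hW) p x : V) = aeval g p x := by
  induction p using Polynomial.induction_on' with
  | add p q hp hq => simp only [map_add, LinearMap.add_apply, Submodule.coe_add, hp, hq]
  | monomial n a =>
    simp only [aeval_monomial, Module.End.mul_apply, Module.algebraMap_end_apply,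
      Module.End.pow_restrict n hW, SetLike.val_smul, LinearMap.coe_restrict_apply]

theorem aeval_restrict_eq_zero_iff {p : F[X]} :
    aeval (g.restrict hW) p = 0 ↔ W ≤ LinearMap.ker (aeval g p) := by
  refine ⟨fun h x hx ↦ ?_, fun h ↦ LinearMap.ext fun x ↦ Subtype.ext ?_⟩
  · simpa [h] using (aeval_restrict_apply hW p ⟨x, hx⟩).symm
  · simpa [aeval_restrict_apply] using h x.2

theorem minpoly_restrict_dvd : minpoly F (g.restrict hW) ∣ minpoly F g :=
  minpoly.dvd _ _ <| (aeval_restrict_eq_zero_iff hW).mpr <| by simp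

theorem le_ker_aeval_minpoly_restrict : W ≤ LinearMap.ker (aeval g (minpoly F (g.restrict hW))) :=
  (aeval_restrict_eq_zero_iff hW).mp (minpoly.aeval _ _)

variable [FiniteDimensional F V]

theorem natDegree_minpoly_le_finrank (f : Module.End F V) :
    (minpoly F f).natDegree ≤ finrank F V :=
  (natDegree_le_of_dvd (LinearMap.minpoly_dvd_charpoly f) f.charpoly_monic.ne_zero).trans_eq
    f.charpoly_natDegree

theorem dvd_minpoly_restrict {p q : F[X]} (hpq : p * q = minpoly F g)
    (hpW : LinearMap.range (aeval g p) ≤ W) : q ∣ minpoly F (g.restrict hW) := by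
  have hp : p ≠ 0 := left_ne_zero_of_mul (hpq ▸ minpoly.ne_zero (LinearMap.isIntegral g))
  have hkill : aeval g (minpoly F (g.restrict hW) * p) = 0 := by
    ext x
    rw [map_mul, Module.End.mul_apply]
    exact le_ker_aeval_minpoly_restrict hW (hpW ⟨x, rfl⟩)
  rw [← mul_dvd_mul_iff_left hp, hpq, mul_comm]
  exact minpoly.dvd F g hkill

theorem natDegree_le_finrank_of_range_aeval_le (hW : ∀ x ∈ W, g x ∈ W) {p q : F[X]}
    (hpq : p * q = minpoly F g) (hpW : LinearMap.range (aeval g p) ≤ W) :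
    q.natDegree ≤ finrank F W :=
  (natDegree_le_of_dvd (dvd_minpoly_restrict hW hpq hpW)
    (minpoly.ne_zero (LinearMap.isIntegral _))).trans (natDegree_minpoly_le_finrank _)

theorem natDegree_add_natDegree_eq_finrank (hcyc : (minpoly F g).natDegree = finrank F V)
    {p q : F[X]} (hpq : p * q = minpoly F g) : p.natDegree + q.natDegree = finrank F V := by
  have hpq0 : p * q ≠ 0 := hpq ▸ minpoly.ne_zero (LinearMap.isIntegral g)
  rw [← natDegree_mul (left_ne_zero_of_mul hpq0) (right_ne_zero_of_mul hpq0), hpq, hcyc]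

theorem finrank_ker_aeval (hcyc : (minpoly F g).natDegree = finrank F V) {p q : F[X]}
    (hpq : p * q = minpoly F g) :
    finrank F (LinearMap.ker (aeval g p)) = p.natDegree := by
  have hrange : q.natDegree ≤ finrank F (LinearMap.range (aeval g p)) :=
    natDegree_le_finrank_of_range_aeval_le (mapsTo_range_aeval g p) hpq le_rfl
  have hker : p.natDegree ≤ finrank F (LinearMap.ker (aeval g p)) :=
    natDegree_le_finrank_of_range_aeval_le (mapsTo_ker_aeval g p) (by rw [mul_comm, hpq])
      (range_aeval_le_ker_aeval g hpq)
  have := LinearMap.finrank_range_add_finrank_ker (aeval g p)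
  have := natDegree_add_natDegree_eq_finrank hcyc hpq
  omega

theorem ker_aeval_eq_range_aeval (hcyc : (minpoly F g).natDegree = finrank F V) {p q : F[X]}
    (hpq : p * q = minpoly F g) :
    LinearMap.ker (aeval g p) = LinearMap.range (aeval g q) := by
  have hqp : q * p = minpoly F g := (mul_comm q p).trans hpq
  refine (Submodule.eq_of_le_of_finrank_le (range_aeval_le_ker_aeval g hpq) ?_).symm
  have := LinearMap.finrank_range_add_finrank_ker (aeval g q)
  have := natDegree_add_natDegree_eq_finrank hcyc hpq
  rw [finrank_ker_aeval hcyc hpq, finrank_ker_aeval hcyc hqp] at *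
  omega

theorem natDegree_minpoly_restrict (hcyc : (minpoly F g).natDegree = finrank F V) :
    (minpoly F (g.restrict hW)).natDegree = finrank F W := by
  refine le_antisymm (natDegree_minpoly_le_finrank _) ?_
  obtain ⟨k, hk⟩ := minpoly_restrict_dvd hW
  calc finrank F W
      ≤ finrank F (LinearMap.ker (aeval g (minpoly F (g.restrict hW)))) :=
        Submodule.finrank_mono (le_ker_aeval_minpoly_restrict hW)
    _ = _ := finrank_ker_aeval hcyc hk.symm

theorem charpoly_restrict_eq_minpoly (hcyc : (minpoly F g).natDegree = finrank F V) :
    (g.restrict hW).charpoly = minpoly F (g.restrict hW) :=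
  eq_of_monic_of_dvd_of_natDegree_le (minpoly.monic (LinearMap.isIntegral _))
    (LinearMap.charpoly_monic _) (LinearMap.minpoly_dvd_charpoly _)
    (by rw [LinearMap.charpoly_natDegree, natDegree_minpoly_restrict hW hcyc])

theorem ker_aeval_minpoly_restrict (hcyc : (minpoly F g).natDegree = finrank F V) :
    LinearMap.ker (aeval g (minpoly F (g.restrict hW))) = W := by
  obtain ⟨k, hk⟩ := minpoly_restrict_dvd hW
  refine (Submodule.eq_of_le_of_finrank_le (le_ker_aeval_minpoly_restrict hW) ?_).symm
  rw [finrank_ker_aeval hcyc hk.symm, natDegree_minpoly_restrict hW hcyc]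

theorem charpoly_restrict_ker_aeval (hcyc : (minpoly F g).natDegree = finrank F V) {p q : F[X]}
    (hp : p.Monic) (hpq : p * q = minpoly F g)
    (hK : ∀ x ∈ LinearMap.ker (aeval g p), g x ∈ LinearMap.ker (aeval g p)) :
    (g.restrict hK).charpoly = p := by
  have hdvd : p ∣ minpoly F (g.restrict hK) :=
    dvd_minpoly_restrict hK ((mul_comm q p).trans hpq) (range_aeval_le_ker_aeval g hpq)
  refine eq_of_monic_of_dvd_of_natDegree_le hp (LinearMap.charpoly_monic _)
    (hdvd.trans (LinearMap.minpoly_dvd_charpoly _)) ?_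
  rw [LinearMap.charpoly_natDegree, finrank_ker_aeval hcyc hpq]

end Module.End

section Isometry

variable {F V : Type*} [Field F] [AddCommGroup V] [Module F V] {B : LinearMap.BilinForm F V}
  {g : Module.End F V}

theorem isometry_pow (hg : ∀ x y, B (g x) (g y) = B x y) (n : ℕ) (x y : V) :
    B ((g ^ n) x) ((g ^ n) y) = B x y := by
  induction n generalizing x y with
  | zero => rfl
  | succ n ih => rw [pow_succ', Module.End.mul_apply, Module.End.mul_apply, hg, ih]

theorem isometry_aeval_apply_pow_apply (hg : ∀ x y, B (g x) (g y) = B x y) {N : ℕ} {p : F[X]}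
    (hp : p.natDegree ≤ N) (x y : V) :
    B (aeval g p x) ((g ^ N) y) = B x (aeval g (reflect N p) y) := by
  refine induction_with_natDegree_le
    (fun p ↦ ∀ x y, B (aeval g p x) ((g ^ N) y) = B x (aeval g (reflect N p) y)) N
    (by simp) (fun n r _ hn x y ↦ ?_) (fun p q _ _ hp hq x y ↦ ?_) p hp x y
  · obtain ⟨k, rfl⟩ := Nat.exists_eq_add_of_le hn
    simp only [reflect_C_mul_X_pow, revAt_le hn, Nat.add_sub_cancel_left, map_mul, aeval_C,
      map_pow, aeval_X, Module.End.mul_apply, Module.algebraMap_end_apply, map_smul,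
      LinearMap.smul_apply, pow_add, isometry_pow hg]
  · simp only [map_add, LinearMap.add_apply, hp, hq, reflect_add]

theorem isotropic_range_aeval_iff (hg : ∀ x y, B (g x) (g y) = B x y) (hB : B.SeparatingRight)
    (hsurj : Function.Surjective g) (p : F[X]) :
    (∀ x ∈ LinearMap.range (aeval g p), ∀ y ∈ LinearMap.range (aeval g p), B x y = 0) ↔
      aeval g (p.reverse * p) = 0 := by
  have key : ∀ x y, B (aeval g p x) (aeval g p ((g ^ p.natDegree) y)) =
      B x (aeval g (p.reverse * p) y) := by
    intro x y
    rw [← Module.End.mul_apply, ← ((Module.End.commute_aeval g p).pow_left _).eq,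
      Module.End.mul_apply, isometry_aeval_apply_pow_apply hg le_rfl, map_mul,
      Module.End.mul_apply, reverse]
  simp only [LinearMap.mem_range, forall_exists_index, forall_apply_eq_imp_iff]
  constructor
  · intro hiso
    ext y
    exact hB _ fun x ↦ (key x y).symm.trans (hiso _ _)
  · intro h0 x y
    obtain ⟨z, rfl⟩ := (Module.End.coe_pow g p.natDegree ▸ hsurj.iterate p.natDegree) y
    rw [key, h0, LinearMap.zero_apply, map_zero]

end Isometry

theorem isotropic_ker_aeval_iff {F V : Type*} [Field F] [AddCommGroup V] [Module F V]
    [FiniteDimensional F V] {B : LinearMap.BilinForm F V} {g : Module.End F V}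
    (hg : ∀ x y, B (g x) (g y) = B x y) (hB : B.SeparatingRight) (hsurj : Function.Surjective g)
    (hcyc : (minpoly F g).natDegree = finrank F V) {p q : F[X]} (hpq : p * q = minpoly F g) :
    (∀ x ∈ LinearMap.ker (aeval g p), ∀ y ∈ LinearMap.ker (aeval g p), B x y = 0) ↔
      p * recip p ∣ minpoly F g := by
  have h0 : (p * q).coeff 0 ≠ 0 := hpq ▸
    LinearMap.minpoly_coeff_zero_of_injective (LinearMap.injective_iff_surjective.mpr hsurj)
  rw [mul_coeff_zero] at h0
  rw [Module.End.ker_aeval_eq_range_aeval hcyc hpq, isotropic_range_aeval_iff hg hB hsurj,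
    ← minpoly.dvd_iff, ← hpq, mul_recip_dvd_mul_iff (left_ne_zero_of_mul h0)
    (right_ne_zero_of_mul h0)]

theorem stmt11_general {F V : Type*} [Field F]
    [AddCommGroup V] [Module F V] [FiniteDimensional F V]
    (B : LinearMap.BilinForm F V)
    (hnd : B.Nondegenerate)
    (g : V ≃ₗ[F] V) (hg : ∀ x y : V, B (g x) (g y) = B x y)
    (fg : Polynomial F) (hfg : fg = LinearMap.charpoly (g : Module.End F V))
    (hcyc : minpoly F (g : Module.End F V) = fg)
    (d : ℕ) :
    -- the map `W ↦ charpoly (g|_W)` lands in the target set, and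
    -- `ker (charpoly (g|_W))(g) = W` (so the map is injective):
    (∀ (W : Submodule F V) (hW : ∀ x ∈ W, (g : Module.End F V) x ∈ W),
      (∀ x ∈ W, ∀ y ∈ W, B x y = 0) → Module.finrank F W = d →
      (LinearMap.charpoly (LinearMap.restrict (g : Module.End F V) hW)).Monic ∧
      (LinearMap.charpoly (LinearMap.restrict (g : Module.End F V) hW)).natDegree = d ∧
      LinearMap.charpoly (LinearMap.restrict (g : Module.End F V) hW) *
          recip (LinearMap.charpoly (LinearMap.restrict (g : Module.End F V) hW)) ∣ fg ∧
      LinearMap.ker (Polynomial.aeval (g : Module.End F V)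
          (LinearMap.charpoly (LinearMap.restrict (g : Module.End F V) hW))) = W) ∧
    -- conversely, for every monic `U` of degree `d` with `U·U* ∣ f_g`, the
    -- subspace `ker U(g)` is a `d`-dimensional `g`-stable totally isotropic
    -- subspace whose image under the above map is `U` (so the map is surjective
    -- with inverse `U ↦ ker U(g)`):
    (∀ U : Polynomial F, U.Monic → U.natDegree = d → U * recip U ∣ fg →
      (∀ x ∈ LinearMap.ker (Polynomial.aeval (g : Module.End F V) U),
        (g : Module.End F V) x ∈ LinearMap.ker (Polynomial.aeval (g : Module.End F V) U)) ∧
      (∀ x ∈ LinearMap.ker (Polynomial.aeval (g : Module.End F V) U),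
        ∀ y ∈ LinearMap.ker (Polynomial.aeval (g : Module.End F V) U), B x y = 0) ∧
      Module.finrank F (LinearMap.ker (Polynomial.aeval (g : Module.End F V) U)) = d ∧
      ∀ hK : ∀ x ∈ LinearMap.ker (Polynomial.aeval (g : Module.End F V) U),
          (g : Module.End F V) x ∈ LinearMap.ker (Polynomial.aeval (g : Module.End F V) U),
        LinearMap.charpoly (LinearMap.restrict (g : Module.End F V) hK) = U) := by
  subst hcyc
  have hdeg : (minpoly F (g : Module.End F V)).natDegree = finrank F V := by
    rw [hfg, LinearMap.charpoly_natDegree]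
  refine ⟨fun W hW hWiso hWd ↦ ?_, fun U hU hUd hUf ↦ ?_⟩
  · obtain ⟨h, hh⟩ := Module.End.minpoly_restrict_dvd hW
    have hker := Module.End.ker_aeval_minpoly_restrict hW hdeg
    rw [Module.End.charpoly_restrict_eq_minpoly hW hdeg]
    refine ⟨minpoly.monic (LinearMap.isIntegral _), ?_, ?_, hker⟩
    · rw [Module.End.natDegree_minpoly_restrict hW hdeg, hWd]
    · rwa [← isotropic_ker_aeval_iff hg hnd.2 g.surjective hdeg hh.symm, hker]
  · obtain ⟨h, hh⟩ := (dvd_mul_right U (recip U)).trans hUf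
    exact ⟨Module.End.mapsTo_ker_aeval _ U,
      (isotropic_ker_aeval_iff hg hnd.2 g.surjective hdeg hh.symm).mpr hUf,
      (Module.End.finrank_ker_aeval hdeg hh.symm).trans hUd,
      Module.End.charpoly_restrict_ker_aeval hdeg hU hh.symm⟩

/-- Let `V` be a finite-dimensional space over `F_q` (`q` odd)
with a nondegenerate symmetric bilinear form `B`, and `g` an isometry whose
minimal polynomial equals its characteristic polynomial `f_g`.  Then for every
`d ≥ 0`, the map `W ↦ charpoly (g|_W)` is a bijection from the `d`-dimensional
`g`-stable totally isotropic subspaces of `V` onto the monic `U` of degree `d`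
with `U·U* ∣ f_g`; its inverse sends `U` to `ker U(g)`. -/
theorem stmt11 {F V : Type*} [Field F] [Fintype F] (hodd : Odd (Fintype.card F))
    [AddCommGroup V] [Module F V] [FiniteDimensional F V]
    (B : LinearMap.BilinForm F V) (hsymm : ∀ x y : V, B x y = B y x)
    (hnd : B.Nondegenerate)
    (g : V ≃ₗ[F] V) (hg : ∀ x y : V, B (g x) (g y) = B x y)
    (fg : Polynomial F) (hfg : fg = LinearMap.charpoly (g : Module.End F V))
    (hcyc : minpoly F (g : Module.End F V) = fg)
    (d : ℕ) :
    -- the map `W ↦ charpoly (g|_W)` lands in the target set, and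
    -- `ker (charpoly (g|_W))(g) = W` (so the map is injective):
    (∀ (W : Submodule F V) (hW : ∀ x ∈ W, (g : Module.End F V) x ∈ W),
      (∀ x ∈ W, ∀ y ∈ W, B x y = 0) → Module.finrank F W = d →
      (LinearMap.charpoly (LinearMap.restrict (g : Module.End F V) hW)).Monic ∧
      (LinearMap.charpoly (LinearMap.restrict (g : Module.End F V) hW)).natDegree = d ∧
      LinearMap.charpoly (LinearMap.restrict (g : Module.End F V) hW) *
          recip (LinearMap.charpoly (LinearMap.restrict (g : Module.End F V) hW)) ∣ fg ∧
      LinearMap.ker (Polynomial.aeval (g : Module.End F V)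
          (LinearMap.charpoly (LinearMap.restrict (g : Module.End F V) hW))) = W) ∧
    -- conversely, for every monic `U` of degree `d` with `U·U* ∣ f_g`, the
    -- subspace `ker U(g)` is a `d`-dimensional `g`-stable totally isotropic
    -- subspace whose image under the above map is `U` (so the map is surjective
    -- with inverse `U ↦ ker U(g)`):
    (∀ U : Polynomial F, U.Monic → U.natDegree = d → U * recip U ∣ fg →
      (∀ x ∈ LinearMap.ker (Polynomial.aeval (g : Module.End F V) U),
        (g : Module.End F V) x ∈ LinearMap.ker (Polynomial.aeval (g : Module.End F V) U)) ∧
      (∀ x ∈ LinearMap.ker (Polynomial.aeval (g : Module.End F V) U),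
        ∀ y ∈ LinearMap.ker (Polynomial.aeval (g : Module.End F V) U), B x y = 0) ∧
      Module.finrank F (LinearMap.ker (Polynomial.aeval (g : Module.End F V) U)) = d ∧
      ∀ hK : ∀ x ∈ LinearMap.ker (Polynomial.aeval (g : Module.End F V) U),
          (g : Module.End F V) x ∈ LinearMap.ker (Polynomial.aeval (g : Module.End F V) U),
        LinearMap.charpoly (LinearMap.restrict (g : Module.End F V) hK) = U) :=
  stmt11_general B hnd g hg fg hfg hcyc d
end

section
/- Let p be an odd prime, let W be a finite-dimensional ℚ_p-vector space with a nondegenerate symmetric bilinear form B, and let L ⊂ W be a full-rank ℤ_p-lattice satisfying pL^∨ ⊆ L ⊆ L^∨, where L^∨ := {x ∈ W : B(x, y) ∈ ℤ_p for all y ∈ L}. Let v ∈ L with v ∉ pL and B(v, v) ≠ 0, and suppose the reflection τ_v : W → W, τ_v(x) = x − 2·B(x, v)·B(v, v)^{-1}·v, maps L into L. Then B(x, v) ∈ B(v, v)·ℤ_p for every x ∈ L (equivalently v ∈ B(v, v)·L^∨), and the p-adic valuation of B(v, v) is 0 or 1. -/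
/-!
If `c • v ∈ L` for a vector `v ∈ L \ pL`, then `c ∈ ℤ_p`: otherwise `ord_p c ≤ -1`, so
`(pc)⁻¹ ∈ ℤ_p` and `v = p • ((pc)⁻¹ c • v) ∈ pL`. Applied to `v - τ_v x = (2 B(x,v) / B(v,v)) • v`,
with `2` a unit since `p` is odd, this gives `B(x,v) ∈ B(v,v) ℤ_p`. Hence `B(v,v)⁻¹ v ∈ L^∨`, so
`p B(v,v)⁻¹ v ∈ L` and `p / B(v,v) ∈ ℤ_p`, while `B(v,v) ∈ ℤ_p` because `v ∈ L ⊆ L^∨`.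
-/

open Padic

theorem Padic.norm_two_eq_one_of_odd {p : ℕ} [Fact p.Prime] (hp : Odd p) :
    ‖(2 : ℚ_[p])‖ = 1 := by
  exact_mod_cast norm_natCast_eq_one_iff.mpr (Nat.coprime_two_right.mpr hp)

theorem Padic.valuation_eq_zero_or_one_of_norm_le_one {p : ℕ} [Fact p.Prime] {x : ℚ_[p]}
    (hx : x ≠ 0) (hx_int : ‖x‖ ≤ 1) (hpx_int : ‖(p : ℚ_[p]) * x⁻¹‖ ≤ 1) :
    x.valuation = 0 ∨ x.valuation = 1 := by
  have hp0 : (p : ℚ_[p]) ≠ 0 := Nat.cast_ne_zero.mpr (Fact.out : p.Prime).ne_zero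
  rw [norm_le_one_iff_val_nonneg] at hx_int
  rw [norm_le_one_iff_val_nonneg, valuation_mul hp0 (inv_ne_zero hx), valuation_p,
    valuation_inv] at hpx_int
  omega

namespace Submodule

variable {p : ℕ} [Fact p.Prime] {W : Type*} [AddCommGroup W] [Module ℚ_[p] W] [Module ℤ_[p] W]
  [IsScalarTower ℤ_[p] ℚ_[p] W] {L : Submodule ℤ_[p] W}

theorem smul_mem_of_norm_le_one {t : ℚ_[p]} (ht : ‖t‖ ≤ 1) {x : W} (hx : x ∈ L) : t • x ∈ L :=
  algebraMap_smul (R := ℤ_[p]) ℚ_[p] ⟨t, ht⟩ x ▸ L.smul_mem _ hx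

theorem norm_le_one_of_smul_mem {v : W} (hv : ¬ ∃ u ∈ L, v = (p : ℚ_[p]) • u) {c : ℚ_[p]}
    (hc : c • v ∈ L) : ‖c‖ ≤ 1 := by
  by_contra! hc1
  have hc0 : c ≠ 0 := by rintro rfl; norm_num at hc1
  have hp0 : (p : ℚ_[p]) ≠ 0 := Nat.cast_ne_zero.mpr (Fact.out : p.Prime).ne_zero
  have ht : ‖((p : ℚ_[p]) * c)⁻¹‖ ≤ 1 := by
    rw [← not_le, norm_le_one_iff_val_nonneg, not_le] at hc1
    rw [norm_le_one_iff_val_nonneg, valuation_inv, valuation_mul hp0 hc0, valuation_p]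
    omega
  refine hv ⟨((p : ℚ_[p]) * c)⁻¹ • c • v, smul_mem_of_norm_le_one ht hc, ?_⟩
  rw [smul_smul, smul_smul, show (p : ℚ_[p]) * ((p : ℚ_[p]) * c)⁻¹ * c = 1 by field_simp,
    one_smul]

theorem exists_eq_mul_of_reflection_mem (hp : Odd p) (B : LinearMap.BilinForm ℚ_[p] W) {v : W}
    (hv : ¬ ∃ u ∈ L, v = (p : ℚ_[p]) • u) (hvv : B v v ≠ 0)
    (hrefl : ∀ x ∈ L, x - (2 * B x v * (B v v)⁻¹) • v ∈ L) {x : W} (hx : x ∈ L) :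
    ∃ c : ℤ_[p], B x v = B v v * c := by
  have h2 : ‖2 * (B x v * (B v v)⁻¹)‖ ≤ 1 :=
    norm_le_one_of_smul_mem hv (by simpa [mul_assoc] using L.sub_mem hx (hrefl x hx))
  rw [norm_mul, norm_two_eq_one_of_odd hp, one_mul] at h2
  exact ⟨⟨_, h2⟩, by field_simp⟩

end Submodule

theorem stmt18_general (p : ℕ) [Fact p.Prime] (hp : Odd p)
    {W : Type*} [AddCommGroup W] [Module ℚ_[p] W]
    [Module ℤ_[p] W] [IsScalarTower ℤ_[p] ℚ_[p] W]
    (B : LinearMap.BilinForm ℚ_[p] W) (hsymm : ∀ x y : W, B x y = B y x)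
    (L : Submodule ℤ_[p] W)
    (Ldual : Set W)
    (hLdual : Ldual = {x : W | ∀ y ∈ L, ∃ c : ℤ_[p], B x y = (c : ℚ_[p])})
    (hpLd : ∀ x ∈ Ldual, (p : ℚ_[p]) • x ∈ L)
    (hLLd : (L : Set W) ⊆ Ldual)
    (v : W) (hvL : v ∈ L) (hvp : ¬ ∃ u ∈ L, v = (p : ℚ_[p]) • u)
    (hvv : B v v ≠ 0)
    (hrefl : ∀ x ∈ L, x - (2 * B x v * (B v v)⁻¹) • v ∈ L) :
    (∀ x ∈ L, ∃ c : ℤ_[p], B x v = B v v * (c : ℚ_[p])) ∧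
    ((B v v).valuation = 0 ∨ (B v v).valuation = 1) := by
  have hdiv : ∀ x ∈ L, ∃ c : ℤ_[p], B x v = B v v * c := fun x hx ↦
    L.exists_eq_mul_of_reflection_mem hp B hvp hvv hrefl hx
  refine ⟨hdiv, ?_⟩
  have hvv_int : ‖B v v‖ ≤ 1 := by
    have hv_dual : v ∈ Ldual := hLLd hvL
    rw [hLdual] at hv_dual
    obtain ⟨c, hc⟩ := hv_dual v hvL
    exact hc ▸ c.norm_le_one
  have hw_dual : (B v v)⁻¹ • v ∈ Ldual := by
    rw [hLdual]
    intro y hy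
    obtain ⟨c, hc⟩ := hdiv y hy
    exact ⟨c, by rw [LinearMap.map_smul₂, smul_eq_mul, hsymm v y, hc, inv_mul_cancel_left₀ hvv]⟩
  have hpw : ((p : ℚ_[p]) * (B v v)⁻¹) • v ∈ L := smul_smul (p : ℚ_[p]) _ v ▸ hpLd _ hw_dual
  exact valuation_eq_zero_or_one_of_norm_le_one hvv hvv_int (L.norm_le_one_of_smul_mem hvp hpw)

/-- Let `p` be an odd prime, `W` a finite-dimensional
`ℚ_p`-vector space with a nondegenerate symmetric bilinear form `B`, and
`L ⊂ W` a full-rank `ℤ_p`-lattice with `pL^∨ ⊆ L ⊆ L^∨`.  Let `v ∈ L` with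
`v ∉ pL` and `B(v,v) ≠ 0`, and suppose the reflection
`τ_v : x ↦ x - 2·B(x,v)·B(v,v)⁻¹·v` maps `L` into `L`.  Then
`B(x,v) ∈ B(v,v)·ℤ_p` for all `x ∈ L`, and the `p`-adic valuation of `B(v,v)`
is `0` or `1`. -/
theorem stmt18 (p : ℕ) [Fact p.Prime] (hp : Odd p)
    {W : Type*} [AddCommGroup W] [Module ℚ_[p] W] [FiniteDimensional ℚ_[p] W]
    [Module ℤ_[p] W] [IsScalarTower ℤ_[p] ℚ_[p] W]
    (B : LinearMap.BilinForm ℚ_[p] W) (hsymm : ∀ x y : W, B x y = B y x)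
    (hnd : B.Nondegenerate)
    (L : Submodule ℤ_[p] W) (hfg : L.FG)
    (hfull : Submodule.span ℚ_[p] (L : Set W) = ⊤)
    (Ldual : Set W)
    (hLdual : Ldual = {x : W | ∀ y ∈ L, ∃ c : ℤ_[p], B x y = (c : ℚ_[p])})
    (hpLd : ∀ x ∈ Ldual, (p : ℚ_[p]) • x ∈ L)
    (hLLd : (L : Set W) ⊆ Ldual)
    (v : W) (hvL : v ∈ L) (hvp : ¬ ∃ u ∈ L, v = (p : ℚ_[p]) • u)
    (hvv : B v v ≠ 0)
    (hrefl : ∀ x ∈ L, x - (2 * B x v * (B v v)⁻¹) • v ∈ L) :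
    (∀ x ∈ L, ∃ c : ℤ_[p], B x v = B v v * (c : ℚ_[p])) ∧
    ((B v v).valuation = 0 ∨ (B v v).valuation = 1) :=
  stmt18_general p hp B hsymm L Ldual hLdual hpLd hLLd v hvL hvp hvv hrefl
end

section
/- Let p be an odd prime, let W be a finite-dimensional ℚ_p-vector space with a nondegenerate symmetric bilinear form B, and let L ⊂ W be a full-rank ℤ_p-lattice satisfying pL^∨ ⊆ L ⊆ L^∨, where L^∨ := {x ∈ W : B(x, y) ∈ ℤ_p for all y ∈ L}. Let v ∈ L with v ∉ pL and B(v, v) ≠ 0, and suppose the reflection τ_v : x ↦ x − 2·B(x, v)·B(v, v)^{-1}·v maps L into L. If B(v, v) is a p-adic unit, then τ_v(x) − x ∈ L for every x ∈ L^∨, i.e., τ_v induces the identity on the F_p-vector space L^∨/L; and if the p-adic valuation of B(v, v) equals 1, then v ∈ pL^∨. -/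
/-!
Write `s_x = 2 B(x,v) / B(v,v)`, so that `τ_v x - x = -s_x v`. If `B(v,v)` is a unit then
`s_x ∈ ℤ_p` for `x ∈ L^∨`, and `s_x v ∈ L`. If `B(v,v)` has valuation one, then for `x ∈ L`
the reflection gives `s_x v ∈ L`; since `v ∉ pL` this forces `|s_x| < p`, i.e. `B(x,v) ∈ pℤ_p`,
so `B(v/p, L) ⊆ ℤ_p`.
-/

namespace Padic

variable {p : ℕ} [Fact p.Prime]

lemma exists_padicInt_eq_iff_norm_le_one {q : ℚ_[p]} :
    (∃ c : ℤ_[p], q = c) ↔ ‖q‖ ≤ 1 :=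
  ⟨fun ⟨c, hc⟩ => hc ▸ c.2, fun hq => ⟨⟨q, hq⟩, rfl⟩⟩

lemma norm_two_of_odd (hp : Odd p) : ‖(2 : ℚ_[p])‖ = 1 := by
  simpa using norm_natCast_eq_one_iff.mpr (Nat.coprime_two_left.mpr hp).symm

lemma norm_le_inv_of_norm_lt_one {q : ℚ_[p]} (hq : ‖q‖ < 1) : ‖q‖ ≤ (p : ℝ)⁻¹ := by
  simpa using (norm_lt_pow_iff_norm_le_pow_sub_one q 0).mp (by simpa using hq)

end Padic

section Lattice

variable {p : ℕ} [Fact p.Prime] {W : Type*} [AddCommGroup W] [Module ℚ_[p] W]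
  [Module ℤ_[p] W] [IsScalarTower ℤ_[p] ℚ_[p] W] (L : Submodule ℤ_[p] W)

lemma Submodule.smul_mem_of_norm_le_one_s19 {q : ℚ_[p]} (hq : ‖q‖ ≤ 1) {x : W} (hx : x ∈ L) :
    q • x ∈ L := by
  let c : ℤ_[p] := ⟨q, hq⟩
  rw [show q = algebraMap ℤ_[p] ℚ_[p] c from rfl, algebraMap_smul]
  exact L.smul_mem c hx

lemma Submodule.norm_lt_of_smul_mem {v : W} (hvp : ¬ ∃ u ∈ L, v = (p : ℚ_[p]) • u)
    {s : ℚ_[p]} (hs : s • v ∈ L) : ‖s‖ < p := by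
  by_contra! hps
  have hp_pos : (0 : ℝ) < p := by exact_mod_cast (Fact.out : p.Prime).pos
  have hs0 : s ≠ 0 := norm_pos_iff.mp (hp_pos.trans_le hps)
  have hp0 : (p : ℚ_[p]) ≠ 0 := by exact_mod_cast (Fact.out : p.Prime).ne_zero
  have hnorm : ‖((p : ℚ_[p]) * s)⁻¹‖ ≤ 1 := by
    rw [norm_inv, norm_mul, Padic.norm_p]
    exact inv_le_one_of_one_le₀ (by rwa [inv_mul_eq_div, one_le_div hp_pos])
  refine hvp ⟨((p : ℚ_[p]) * s)⁻¹ • s • v, L.smul_mem_of_norm_le_one_s19 hnorm hs, ?_⟩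
  have hunit : (p : ℚ_[p]) * (p * s)⁻¹ * s = 1 := by field_simp
  rw [smul_smul, smul_smul, hunit, one_smul]

lemma norm_apply_le_inv_of_reflection_mem (hp : Odd p) (B : LinearMap.BilinForm ℚ_[p] W)
    {v : W} (hvp : ¬ ∃ u ∈ L, v = (p : ℚ_[p]) • u)
    (hvv : ‖B v v‖ = (p : ℝ)⁻¹) (hrefl : ∀ x ∈ L, x - (2 * B x v * (B v v)⁻¹) • v ∈ L)
    {x : W} (hx : x ∈ L) : ‖B x v‖ ≤ (p : ℝ)⁻¹ := by
  have hs : (2 * B x v * (B v v)⁻¹) • v ∈ L := by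
    simpa only [sub_sub_cancel] using L.sub_mem hx (hrefl x hx)
  have hlt := L.norm_lt_of_smul_mem hvp hs
  rw [norm_mul, norm_mul, Padic.norm_two_of_odd hp, one_mul, norm_inv, hvv, inv_inv] at hlt
  exact Padic.norm_le_inv_of_norm_lt_one
    (lt_of_mul_lt_mul_right (by simpa using hlt) (Nat.cast_nonneg p))

end Lattice

theorem stmt19_general (p : ℕ) [Fact p.Prime] (hp : Odd p)
    {W : Type*} [AddCommGroup W] [Module ℚ_[p] W]
    [Module ℤ_[p] W] [IsScalarTower ℤ_[p] ℚ_[p] W]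
    (B : LinearMap.BilinForm ℚ_[p] W) (hsymm : ∀ x y : W, B x y = B y x)
    (L : Submodule ℤ_[p] W)
    (Ldual : Set W)
    (hLdual : Ldual = {x : W | ∀ y ∈ L, ∃ c : ℤ_[p], B x y = (c : ℚ_[p])})
    (v : W) (hvL : v ∈ L) (hvp : ¬ ∃ u ∈ L, v = (p : ℚ_[p]) • u)
    (hvv : B v v ≠ 0)
    (hrefl : ∀ x ∈ L, x - (2 * B x v * (B v v)⁻¹) • v ∈ L) :
    (‖B v v‖ = 1 → ∀ x ∈ Ldual, (x - (2 * B x v * (B v v)⁻¹) • v) - x ∈ L) ∧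
    ((B v v).valuation = 1 → ∃ w ∈ Ldual, v = (p : ℚ_[p]) • w) := by
  subst hLdual
  refine ⟨fun hunit x hx => ?_, fun hval => ?_⟩
  · have hxv : ‖B x v‖ ≤ 1 := Padic.exists_padicInt_eq_iff_norm_le_one.mp (hx v hvL)
    rw [sub_sub_cancel_left]
    refine L.neg_mem (L.smul_mem_of_norm_le_one_s19 ?_ hvL)
    rwa [norm_mul, norm_mul, Padic.norm_two_of_odd hp, norm_inv, hunit, one_mul, inv_one, mul_one]
  · have hp0 : (p : ℚ_[p]) ≠ 0 := by exact_mod_cast (Fact.out : p.Prime).ne_zero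
    have hnorm : ‖B v v‖ = (p : ℝ)⁻¹ := by
      rw [Padic.norm_eq_zpow_neg_valuation hvv, hval, zpow_neg_one]
    refine ⟨(p : ℚ_[p])⁻¹ • v, fun y hy => ?_, by rw [smul_smul, mul_inv_cancel₀ hp0, one_smul]⟩
    rw [Padic.exists_padicInt_eq_iff_norm_le_one, map_smul, LinearMap.smul_apply, smul_eq_mul,
      norm_mul, norm_inv, Padic.norm_p, inv_inv, hsymm v y]
    calc (p : ℝ) * ‖B y v‖ ≤ p * (p : ℝ)⁻¹ := by
          gcongr; exact norm_apply_le_inv_of_reflection_mem L hp B hvp hnorm hrefl hy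
      _ = 1 := mul_inv_cancel₀ (by exact_mod_cast hp0)

/-- Let `p` be an odd prime, `W` a finite-dimensional
`ℚ_p`-vector space with a nondegenerate symmetric bilinear form `B`, and
`L ⊂ W` a full-rank `ℤ_p`-lattice with `pL^∨ ⊆ L ⊆ L^∨`.  Let `v ∈ L` with
`v ∉ pL` and `B(v,v) ≠ 0`, and suppose the reflection
`τ_v : x ↦ x - 2·B(x,v)·B(v,v)⁻¹·v` maps `L` into `L`.  If `B(v,v)` is a
`p`-adic unit then `τ_v(x) - x ∈ L` for every `x ∈ L^∨` (so `τ_v` induces the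
identity on `L^∨/L`); and if the `p`-adic valuation of `B(v,v)` equals `1`,
then `v ∈ p·L^∨`. -/
theorem stmt19 (p : ℕ) [Fact p.Prime] (hp : Odd p)
    {W : Type*} [AddCommGroup W] [Module ℚ_[p] W] [FiniteDimensional ℚ_[p] W]
    [Module ℤ_[p] W] [IsScalarTower ℤ_[p] ℚ_[p] W]
    (B : LinearMap.BilinForm ℚ_[p] W) (hsymm : ∀ x y : W, B x y = B y x)
    (hnd : B.Nondegenerate)
    (L : Submodule ℤ_[p] W) (hfg : L.FG)
    (hfull : Submodule.span ℚ_[p] (L : Set W) = ⊤)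
    (Ldual : Set W)
    (hLdual : Ldual = {x : W | ∀ y ∈ L, ∃ c : ℤ_[p], B x y = (c : ℚ_[p])})
    (hpLd : ∀ x ∈ Ldual, (p : ℚ_[p]) • x ∈ L)
    (hLLd : (L : Set W) ⊆ Ldual)
    (v : W) (hvL : v ∈ L) (hvp : ¬ ∃ u ∈ L, v = (p : ℚ_[p]) • u)
    (hvv : B v v ≠ 0)
    (hrefl : ∀ x ∈ L, x - (2 * B x v * (B v v)⁻¹) • v ∈ L) :
    (‖B v v‖ = 1 → ∀ x ∈ Ldual, (x - (2 * B x v * (B v v)⁻¹) • v) - x ∈ L) ∧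
    ((B v v).valuation = 1 → ∃ w ∈ Ldual, v = (p : ℚ_[p]) • w) :=
  stmt19_general p hp B hsymm L Ldual hLdual v hvL hvp hvv hrefl
end
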